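/- arXiv:1604.02002 — 5 statements merged into one kernel-verified Lean document; each statement's English description precedes it below -/
import Mathlib

section
/- Assume V : ℝ^n → ℝ is of class C², satisfies (Hcoerc), and all critical points of V are nondegenerate. Then there exists a constant C > 0, depending only on V, such that for every c > 0 and every bounded solution φ : ℝ → ℝ^n of the differential system φ'' = −c φ' + ∇V(φ): sup_{x∈ℝ} |φ(x)| ≤ C, and there exist critical points u₋ and u₊ of V such that φ(x) → u₋ as x → −∞ and φ(x) → u₊ as x → +∞; moreover, if φ is nonconstant, then V(u₋) < V(u₊). -/
open Filter Topology Set MeasureTheory Real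

noncomputable section

variable {n : ℕ}

/-- The Hessian of `V` at `u`, i.e. the derivative of the gradient of `V`. -/
def hessian (V : EuclideanSpace ℝ (Fin n) → ℝ) (u : EuclideanSpace ℝ (Fin n)) :
    EuclideanSpace ℝ (Fin n) →L[ℝ] EuclideanSpace ℝ (Fin n) :=
  fderiv ℝ (gradient V) u

/-- `m` is a nondegenerate local minimum point of `V`: it is a critical point and
the Hessian of `V` at `m` is positive definite. -/
def IsMinPt (V : EuclideanSpace ℝ (Fin n) → ℝ) (m : EuclideanSpace ℝ (Fin n)) : Prop :=
  gradient V m = 0 ∧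
    ∀ w : EuclideanSpace ℝ (Fin n), w ≠ 0 → 0 < (inner ℝ (hessian V m w) w : ℝ)

/-- Coercivity hypothesis (Hcoerc): `u · ∇V(u) ≥ ε |u|²` for `|u|` large. -/
def Hcoerc (V : EuclideanSpace ℝ (Fin n) → ℝ) : Prop :=
  ∃ ε > (0 : ℝ), ∃ R : ℝ, ∀ u : EuclideanSpace ℝ (Fin n), R ≤ ‖u‖ →
    ε * ‖u‖ ^ 2 ≤ (inner ℝ u (gradient V u) : ℝ)

/-- `φ` is a (C²) solution of the travelling-wave equation `φ'' = -c φ' + ∇V(φ)`. -/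
def SolTW (V : EuclideanSpace ℝ (Fin n) → ℝ) (c : ℝ) (φ : ℝ → EuclideanSpace ℝ (Fin n)) :
    Prop :=
  ContDiff ℝ 2 φ ∧
    ∀ x : ℝ, deriv (deriv φ) x = (-c) • deriv φ x + gradient V (φ x)

/-- The set `Φ_c(u₋, u₊)` of nonconstant travelling-wave profiles at speed `c`
connecting `u₋` (at `-∞`) to `u₊` (at `+∞`). -/
def PhiSet (V : EuclideanSpace ℝ (Fin n) → ℝ) (c : ℝ)
    (um up : EuclideanSpace ℝ (Fin n)) : Set (ℝ → EuclideanSpace ℝ (Fin n)) :=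
  {φ | SolTW V c φ ∧ (∃ x y, φ x ≠ φ y) ∧
    Tendsto φ atBot (𝓝 um) ∧ Tendsto φ atTop (𝓝 up)}

/-- The set `Φ_{c,norm}(u₋, u₊)` of normalized travelling-wave profiles. -/
def PhiNorm (V : EuclideanSpace ℝ (Fin n) → ℝ) (dEsc c : ℝ)
    (um up : EuclideanSpace ℝ (Fin n)) : Set (ℝ → EuclideanSpace ℝ (Fin n)) :=
  {φ | φ ∈ PhiSet V c um up ∧ ‖φ 0 - up‖ = dEsc ∧ ∀ ξ : ℝ, 0 < ξ → ‖φ ξ - up‖ < dEsc}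

/-- Property of the escape distance `dEsc`: at distance at most `dEsc` of every
nondegenerate local minimum point, every eigenvalue of the Hessian of `V` lies
between `lamMin / 2` and `2 * lamMax`. -/
def EscSandwich (V : EuclideanSpace ℝ (Fin n) → ℝ) (lamMin lamMax dEsc : ℝ) : Prop :=
  ∀ m, IsMinPt V m → ∀ u : EuclideanSpace ℝ (Fin n), ‖u - m‖ ≤ dEsc →
    ∀ lam : ℝ, ∀ w : EuclideanSpace ℝ (Fin n), w ≠ 0 → hessian V u w = lam • w →
      lamMin / 2 ≤ lam ∧ lam ≤ 2 * lamMax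

/-- A bounded classical solution of `u_t = -∇V(u) + u_xx` (first argument: space,
second argument: time), with bounded partial derivatives on `ℝ × [ε, ∞)` for every
`ε > 0`. -/
def IsBddSol (V : EuclideanSpace ℝ (Fin n) → ℝ) (u : ℝ → ℝ → EuclideanSpace ℝ (Fin n)) :
    Prop :=
  ContinuousOn (fun p : ℝ × ℝ => u p.1 p.2) (univ ×ˢ Ici 0) ∧
  (∀ k : ℕ, ContDiffOn ℝ k (fun p : ℝ × ℝ => u p.1 p.2) (univ ×ˢ Ioi 0)) ∧
  (∀ x t : ℝ, 0 < t →
    deriv (fun s => u x s) t = -gradient V (u x t) + deriv (deriv (fun y => u y t)) x) ∧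
  (∃ C, ∀ x t : ℝ, 0 ≤ t → ‖u x t‖ ≤ C) ∧
  (∀ ε : ℝ, 0 < ε → ∃ C, ∀ x t : ℝ, ε ≤ t →
    ‖deriv (fun y => u y t) x‖ ≤ C ∧ ‖deriv (deriv (fun y => u y t)) x‖ ≤ C ∧
    ‖deriv (fun s => u x s) t‖ ≤ C)

/-- A bounded classical solution of `v_t - c v_y = -∇V(v) + v_yy` (first argument:
space, second argument: time), with bounded partial derivatives. -/
def IsBddSolTF (V : EuclideanSpace ℝ (Fin n) → ℝ) (c : ℝ)
    (v : ℝ → ℝ → EuclideanSpace ℝ (Fin n)) : Prop :=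
  ContinuousOn (fun p : ℝ × ℝ => v p.1 p.2) (univ ×ˢ Ici 0) ∧
  (∀ k : ℕ, ContDiffOn ℝ k (fun p : ℝ × ℝ => v p.1 p.2) (univ ×ˢ Ioi 0)) ∧
  (∀ y s : ℝ, 0 < s →
    deriv (fun τ => v y τ) s - c • deriv (fun z => v z s) y
      = -gradient V (v y s) + deriv (deriv (fun z => v z s)) y) ∧
  (∃ C, ∀ y s : ℝ, 0 ≤ s → ‖v y s‖ ≤ C) ∧
  (∀ ε : ℝ, 0 < ε → ∃ C, ∀ y s : ℝ, ε ≤ s →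
    ‖deriv (fun z => v z s) y‖ ≤ C ∧ ‖deriv (deriv (fun z => v z s)) y‖ ≤ C ∧
    ‖deriv (fun τ => v y τ) s‖ ≤ C)

/-!
Outside the ball of radius `max R 1`, (Hcoerc) gives `(|φ|²)'' + c (|φ|²)' ≥ 2 φ·∇V(φ) > 0`, so the
maximum principle for bounded functions traps every bounded wave in that ball. The derivatives of
`φ` are then bounded and uniformly continuous. The energy `|φ'|²/2 - V(φ)` is bounded and decreases
with derivative `-c|φ'|²`, so Barbalat's lemma gives `φ' → 0`, and, applied to `φ'`, `φ'' → 0`;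
hence `∇V(φ) → 0` at `±∞`. A cluster point of `φ` is therefore a critical point, isolated by
nondegeneracy, and a continuous path that eventually avoids every small sphere around a cluster
point converges to it. Finally the energy tends to `-V(u₊)` and `-V(u₋)` at `±∞`, so
`V(u₋) ≤ V(u₊)`, and equality forces the energy to be constant, i.e. `φ' ≡ 0`.
-/

open scoped RealInnerProductSpace

section RealVariable

variable {E : Type*} [NormedAddCommGroup E] [NormedSpace ℝ E]

theorem norm_sub_sub_smul_le_of_hasDerivAt {f f' : ℝ → E} {x h C : ℝ}
    (hf : ∀ t, HasDerivAt f (f' t) t) (hh : 0 ≤ h)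
    (hC : ∀ t ∈ Icc x (x + h), ‖f' t - f' x‖ ≤ C) :
    ‖f (x + h) - f x - h • f' x‖ ≤ C * h := by
  have hg : ∀ t ∈ Icc x (x + h), HasDerivWithinAt (fun s => f s - (s - x) • f' x)
      (f' t - f' x) (Icc x (x + h)) t := fun t _ => by
    simpa using
      ((hf t).fun_sub (((hasDerivAt_id t).sub_const x).smul_const (f' x))).hasDerivWithinAt
  have := norm_image_sub_le_of_norm_deriv_le_segment' hg
    (fun t ht => hC t (Ico_subset_Icc_self ht)) (x + h) ⟨by linarith, le_rfl⟩
  simpa [sub_right_comm] using this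

theorem norm_le_of_hasDerivAt_of_norm_deriv_add_smul_le {φ φ' φ'' : ℝ → E} {c C M : ℝ}
    (hφ : ∀ x, HasDerivAt φ (φ' x) x) (hφ' : ∀ x, HasDerivAt φ' (φ'' x) x)
    (hC : ∀ x, ‖φ x‖ ≤ C) (hM : ∀ x, ‖φ'' x + c • φ' x‖ ≤ M) (x : ℝ) :
    ‖φ' x‖ ≤ 2 * C + M + 2 * |c| * C := by
  have hM₀ : 0 ≤ M := (norm_nonneg _).trans (hM x)
  have hψ : ∀ t ∈ Icc x (x + 1), ‖(φ' t + c • φ t) - (φ' x + c • φ x)‖ ≤ M * (t - x) :=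
    norm_image_sub_le_of_norm_deriv_le_segment'
      (fun t _ => ((hφ' t).add ((hφ t).const_smul c)).hasDerivWithinAt) (fun t _ => hM t)
  have hosc : ∀ t ∈ Icc x (x + 1), ‖φ' t - φ' x‖ ≤ M + 2 * |c| * C := by
    intro t ht
    have hsplit : φ' t - φ' x = ((φ' t + c • φ t) - (φ' x + c • φ x)) - c • (φ t - φ x) := by
      module
    have hφφ : ‖c • (φ t - φ x)‖ ≤ |c| * (2 * C) := by
      rw [norm_smul, Real.norm_eq_abs]
      gcongr
      linarith [norm_sub_le (φ t) (φ x), hC t, hC x]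
    have hMt : M * (t - x) ≤ M := mul_le_of_le_one_right hM₀ (by linarith [ht.2])
    rw [hsplit]
    linarith [norm_sub_le ((φ' t + c • φ t) - (φ' x + c • φ x)) (c • (φ t - φ x)), hψ t ht]
  have key := norm_sub_sub_smul_le_of_hasDerivAt hφ zero_le_one hosc
  rw [one_smul, mul_one] at key
  have hdecomp : φ' x = (φ (x + 1) - φ x) - (φ (x + 1) - φ x - φ' x) := by abel
  rw [hdecomp]
  linarith [norm_sub_le (φ (x + 1) - φ x) (φ (x + 1) - φ x - φ' x),
    norm_sub_le (φ (x + 1)) (φ x), hC (x + 1), hC x]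

theorem tendsto_zero_of_hasDerivAt_of_uniformContinuous {f f' : ℝ → E} {l : Filter ℝ} {a : E}
    (hl : ∀ h, Tendsto (· + h) l l) (hf : ∀ x, HasDerivAt f (f' x) x)
    (hf' : UniformContinuous f') (ha : Tendsto f l (𝓝 a)) : Tendsto f' l (𝓝 0) := by
  rw [Metric.tendsto_nhds]
  intro ε hε
  obtain ⟨η, hη, hf'η⟩ := Metric.uniformContinuous_iff.1 hf' (ε / 2) (half_pos hε)
  obtain ⟨h, hh₀, hhη⟩ : ∃ h, 0 < h ∧ h < η := ⟨η / 2, half_pos hη, half_lt_self hη⟩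
  have hincr : Tendsto (fun x => ‖f (x + h) - f x‖) l (𝓝 0) :=
    tendsto_zero_iff_norm_tendsto_zero.1 (by simpa using (ha.comp (hl h)).sub ha)
  filter_upwards [hincr.eventually_lt_const (by positivity : 0 < h * (ε / 2))] with x hx
  have hosc : ∀ t ∈ Icc x (x + h), ‖f' t - f' x‖ ≤ ε / 2 := fun t ht => by
    refine (dist_eq_norm (f' t) (f' x) ▸ hf'η ?_).le
    rw [Real.dist_eq, abs_of_nonneg (by linarith [ht.1])]
    linarith [ht.2]
  have key := norm_sub_sub_smul_le_of_hasDerivAt hf hh₀.le hosc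
  have hdecomp : h • f' x = (f (x + h) - f x) - (f (x + h) - f x - h • f' x) := by abel
  have : ‖h • f' x‖ < h * ε := by
    rw [hdecomp]
    linarith [norm_sub_le (f (x + h) - f x) (f (x + h) - f x - h • f' x)]
  rw [norm_smul, Real.norm_eq_abs, abs_of_pos hh₀] at this
  rw [dist_zero_right]
  exact lt_of_mul_lt_mul_left this hh₀.le

theorem uniformContinuous_of_hasDerivAt_of_norm_le {f f' : ℝ → E} {C : ℝ}
    (hf : ∀ x, HasDerivAt f (f' x) x) (hC : ∀ x, ‖f' x‖ ≤ C) : UniformContinuous f := by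
  refine Metric.uniformContinuous_iff.2 fun ε hε =>
    ⟨ε / (|C| + 1), by positivity, fun {x y} hxy => ?_⟩
  have := Convex.norm_image_sub_le_of_norm_hasDerivWithin_le (fun t _ => (hf t).hasDerivWithinAt)
    (fun t _ => (hC t).trans (le_abs_self C)) convex_univ (mem_univ y) (mem_univ x)
  rw [dist_eq_norm] at hxy ⊢
  calc ‖f x - f y‖ ≤ |C| * ‖x - y‖ := this
    _ ≤ (|C| + 1) * ‖x - y‖ := by gcongr; linarith
    _ < (|C| + 1) * (ε / (|C| + 1)) := by gcongr
    _ = ε := by field_simp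

theorem ContDiff.hasDerivAt_deriv {φ : ℝ → E} (hφ : ContDiff ℝ 2 φ) (x : ℝ) :
    HasDerivAt (deriv φ) (deriv (deriv φ) x) x := by
  have h : ContDiff ℝ (1 + 1) φ := hφ
  rw [contDiff_succ_iff_deriv] at h
  exact (h.2.2.differentiable one_ne_zero x).hasDerivAt

end RealVariable

section ProperSpace

variable {E : Type*} [NormedAddCommGroup E] [ProperSpace E]

theorem Continuous.comp_uniformContinuous_of_norm_le {α F : Type*}
    [UniformSpace α] [UniformSpace F] {g : E → F} {f : α → E} {C : ℝ} (hg : Continuous g)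
    (hf : UniformContinuous f) (hC : ∀ x, ‖f x‖ ≤ C) : UniformContinuous (g ∘ f) := by
  rw [← uniformContinuousOn_univ] at hf ⊢
  exact ((isCompact_closedBall 0 C).uniformContinuousOn_of_continuous hg.continuousOn).comp hf
    fun x _ => mem_closedBall_zero_iff.2 (hC x)

theorem exists_norm_le_of_continuous {F : Type*} [NormedAddCommGroup F] {g : E → F}
    (hg : Continuous g) (C : ℝ) :
    ∃ M, ∀ u, ‖u‖ ≤ C → ‖g u‖ ≤ M := by
  obtain ⟨M, hM⟩ := (isCompact_closedBall 0 C).exists_bound_of_continuousOn hg.continuousOn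
  exact ⟨M, fun u hu => hM u (mem_closedBall_zero_iff.2 hu)⟩

end ProperSpace

theorem IsLocalMax.nonpos_of_hasDerivAt_deriv {f f' : ℝ → ℝ} {a f'' : ℝ} (h : IsLocalMax f a)
    (hf : ∀ x, HasDerivAt f (f' x) x) (hf' : HasDerivAt f' f'' a) : f'' ≤ 0 := by
  by_contra! hpos
  have hsign := eventually_nhdsWithin_sign_eq_of_deriv_pos (hf'.deriv ▸ hpos)
    (h.hasDerivAt_eq_zero (hf a))
  obtain ⟨b, hab : a < b, hb⟩ := mem_nhdsGT_iff_exists_Ioo_subset.1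
    (nhdsWithin_le_nhds (hsign.and h))
  have hmono : StrictMonoOn f (Icc a b) := by
    refine strictMonoOn_of_hasDerivWithinAt_pos (convex_Icc a b)
      (HasDerivAt.continuousOn fun x _ => hf x) (fun x _ => (hf x).hasDerivWithinAt)
      fun x hx => ?_
    rw [interior_Icc] at hx
    have := (hb hx).1
    rwa [sign_pos (sub_pos.2 hx.1), sign_eq_one_iff] at this
  have hmid : a + (b - a) / 2 ∈ Ioo a b := ⟨by linarith, by linarith⟩
  exact (hmono (left_mem_Icc.2 hab.le) (Ioo_subset_Icc_self hmid) hmid.1).not_ge (hb hmid).2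

section MaximumPrinciple

variable {ρ ρ' ρ'' : ℝ → ℝ} {c δ K A : ℝ}

theorem mul_sub_le_of_le_deriv2_add_mul_deriv (hρ : ∀ x, HasDerivAt ρ (ρ' x) x)
    (hρ' : ∀ x, HasDerivAt ρ' (ρ'' x) x) (hA : ∀ x, |ρ' x + c * ρ x| ≤ A)
    (h : ∀ x, K < ρ x → δ ≤ ρ'' x + c * ρ' x) {a b : ℝ} (hab : a ≤ b)
    (hK : ∀ x ∈ Icc a b, K < ρ x) : δ * (b - a) ≤ 2 * A := by
  have hG : ∀ x, HasDerivAt (fun y => ρ' y + c * ρ y - δ * y) (ρ'' x + c * ρ' x - δ) x :=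
    fun x => by
      simpa using ((hρ' x).fun_add ((hρ x).const_mul c)).fun_sub ((hasDerivAt_id x).const_mul δ)
  have hmono : MonotoneOn (fun y => ρ' y + c * ρ y - δ * y) (Icc a b) :=
    monotoneOn_of_hasDerivWithinAt_nonneg (convex_Icc a b)
      (HasDerivAt.continuousOn fun x _ => hG x) (fun x _ => (hG x).hasDerivWithinAt)
      fun x hx => sub_nonneg.2 (h x (hK x (interior_subset hx)))
  have := hmono (left_mem_Icc.2 hab) (right_mem_Icc.2 hab) hab
  linarith [abs_le.1 (hA a), abs_le.1 (hA b)]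

theorem le_of_le_deriv2_add_mul_deriv (hδ : 0 < δ) (hρ : ∀ x, HasDerivAt ρ (ρ' x) x)
    (hρ' : ∀ x, HasDerivAt ρ' (ρ'' x) x) (hA : ∀ x, |ρ' x + c * ρ x| ≤ A)
    (h : ∀ x, K < ρ x → δ ≤ ρ'' x + c * ρ' x) (x₀ : ℝ) : ρ x₀ ≤ K := by
  -- Otherwise `ρ` drops to `K` within distance `L` on both sides of `x₀`, so it has an interior
  -- maximum above `K`, where `ρ' = 0` and `ρ'' ≤ 0`.
  by_contra! hx₀
  set L := 2 * A / δ + 1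
  have hL : 2 * A < δ * L := by
    rw [mul_add, mul_div_cancel₀ _ hδ.ne']; linarith
  have hL₀ : 0 ≤ L := by
    have := (abs_nonneg _).trans (hA x₀)
    positivity
  have hexit : ∀ a b, a ≤ b → b - a = L → ∃ y ∈ Icc a b, ρ y ≤ K := by
    intro a b hab hba
    by_contra! hK
    have := mul_sub_le_of_le_deriv2_add_mul_deriv hρ hρ' hA h hab hK
    rw [hba] at this
    linarith
  obtain ⟨a, ha, hρa⟩ := hexit (x₀ - L) x₀ (by linarith) (by ring)
  obtain ⟨b, hb, hρb⟩ := hexit x₀ (x₀ + L) (by linarith) (by ring)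
  obtain ⟨ξ, hξ, hmax⟩ := isCompact_Icc.exists_isMaxOn (nonempty_Icc.2 (ha.2.trans hb.1))
    (HasDerivAt.continuousOn fun x _ => hρ x)
  have hρξ : K < ρ ξ := hx₀.trans_le (hmax ⟨ha.2, hb.1⟩)
  have hξ' : ξ ∈ Ioo a b := ⟨lt_of_le_of_ne hξ.1 (by rintro rfl; linarith),
    lt_of_le_of_ne hξ.2 (by rintro rfl; linarith)⟩
  have hloc : IsLocalMax ρ ξ := hmax.isLocalMax (Icc_mem_nhds hξ'.1 hξ'.2)
  have h1 := hloc.nonpos_of_hasDerivAt_deriv hρ (hρ' ξ)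
  have h2 := h ξ hρξ
  rw [hloc.hasDerivAt_eq_zero (hρ ξ), mul_zero] at h2
  linarith

end MaximumPrinciple

theorem tendsto_of_mapClusterPt_of_eventually_notMem_sphere {X : Type*} [PseudoMetricSpace X]
    {γ : ℝ → X} (hγ : Continuous γ) {z : X} (hz : MapClusterPt z atTop γ) {r : ℝ} (hr : 0 < r)
    (hsphere : ∀ ε ∈ Ioo 0 r, ∀ᶠ x in atTop, γ x ∉ Metric.sphere z ε) : Tendsto γ atTop (𝓝 z) := by
  rw [Metric.tendsto_nhds]
  intro ε hε
  set ε' := min ε (r / 2)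
  have hε' : 0 < ε' := lt_min hε (half_pos hr)
  obtain ⟨X, hX⟩ := eventually_atTop.1
    (hsphere ε' ⟨hε', (min_le_right _ _).trans_lt (half_lt_self hr)⟩)
  obtain ⟨x₁, hx₁X, hx₁⟩ := (hz.frequently (Metric.ball_mem_nhds z hε')).forall_exists_of_atTop X
  -- After `x₁`, leaving the ball of radius `ε'` would mean crossing its sphere after time `X`.
  refine eventually_atTop.2 ⟨x₁, fun x hx => ?_⟩
  refine lt_of_lt_of_le ?_ (min_le_left ε (r / 2))
  by_contra! hfar
  obtain ⟨t, ht, hεt⟩ := intermediate_value_Icc hx (hγ.dist continuous_const).continuousOn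
    ⟨(Metric.mem_ball.1 hx₁).le, hfar⟩
  exact hX t (hx₁X.trans ht.1) hεt

def waveEnergy (V : EuclideanSpace ℝ (Fin n) → ℝ) (φ : ℝ → EuclideanSpace ℝ (Fin n)) (x : ℝ) :
    ℝ :=
  ‖deriv φ x‖ ^ 2 / 2 - V (φ x)

section Potential

variable {V : EuclideanSpace ℝ (Fin n) → ℝ}

theorem contDiff_gradient (hV : ContDiff ℝ 2 V) :
    ContDiff ℝ 1 (gradient V) :=
  (InnerProductSpace.toDual ℝ _).symm.contDiff.comp (hV.fderiv_right (by norm_num))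

theorem HasDerivAt.comp_inner_gradient (hV : Differentiable ℝ V)
    {φ : ℝ → EuclideanSpace ℝ (Fin n)} {φ' : EuclideanSpace ℝ (Fin n)} {x : ℝ}
    (hφ : HasDerivAt φ φ' x) : HasDerivAt (fun y => V (φ y)) ⟪gradient V (φ x), φ'⟫ x := by
  simpa [gradient, Function.comp_def] using (hV (φ x)).hasFDerivAt.comp_hasDerivAt x hφ

theorem eventually_gradient_ne_zero (hV : ContDiff ℝ 2 V) {z : EuclideanSpace ℝ (Fin n)}
    (hnd : ∀ w, w ≠ 0 → hessian V z w ≠ 0) :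
    ∀ᶠ u in 𝓝[≠] z, gradient V u ≠ 0 := by
  have hdiff : HasFDerivAt (gradient V) (hessian V z) z :=
    ((contDiff_gradient hV).differentiable one_ne_zero z).hasFDerivAt
  obtain ⟨K, -, hK⟩ := (hessian V z : _ →ₗ[ℝ] _).exists_antilipschitzWith
    (LinearMap.ker_eq_bot'.2 fun w hw => by_contra fun h => hnd w h (by exact hw))
  exact hdiff.eventually_ne ⟨K, hK⟩

theorem exists_tendsto_atTop_of_tendsto_gradient (hV : ContDiff ℝ 2 V)
    (hnd : ∀ u, gradient V u = 0 → ∀ w, w ≠ 0 → hessian V u w ≠ 0)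
    {γ : ℝ → EuclideanSpace ℝ (Fin n)} (hγ : Continuous γ) {C : ℝ} (hC : ∀ x, ‖γ x‖ ≤ C)
    (hg : Tendsto (fun x => gradient V (γ x)) atTop (𝓝 0)) :
    ∃ z, gradient V z = 0 ∧ Tendsto γ atTop (𝓝 z) := by
  have hgrad := (contDiff_gradient hV).continuous
  obtain ⟨z, -, hz⟩ := (isCompact_closedBall (0 : EuclideanSpace ℝ (Fin n)) C).exists_mapClusterPt
    (f := atTop) (u := γ)
    (tendsto_principal.2 (Eventually.of_forall fun x => mem_closedBall_zero_iff.2 (hC x)))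
  have hz₀ : gradient V z = 0 :=
    eq_of_nhds_neBot ((hz.continuousAt_comp hgrad.continuousAt).neBot.mono
      (inf_le_inf_left _ hg))
  obtain ⟨r, hr, hiso⟩ := Metric.eventually_nhds_iff.1
    (eventually_nhdsWithin_iff.1 (eventually_gradient_ne_zero hV (hnd z hz₀)))
  refine ⟨z, hz₀, tendsto_of_mapClusterPt_of_eventually_notMem_sphere hγ hz hr fun ε hε => ?_⟩
  have hsphere : (0 : EuclideanSpace ℝ (Fin n)) ∉ gradient V '' Metric.sphere z ε := by
    rintro ⟨u, hu, hu₀⟩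
    exact hiso (by rw [Metric.mem_sphere.1 hu]; exact hε.2)
      (Metric.ne_of_mem_sphere hu hε.1.ne') hu₀
  filter_upwards [hg (((isCompact_sphere z ε).image hgrad).isClosed.isOpen_compl.mem_nhds
    hsphere)] with x hx hxs
  exact hx (mem_image_of_mem _ hxs)

theorem exists_tendsto_atBot_of_tendsto_gradient (hV : ContDiff ℝ 2 V)
    (hnd : ∀ u, gradient V u = 0 → ∀ w, w ≠ 0 → hessian V u w ≠ 0)
    {γ : ℝ → EuclideanSpace ℝ (Fin n)} (hγ : Continuous γ) {C : ℝ} (hC : ∀ x, ‖γ x‖ ≤ C)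
    (hg : Tendsto (fun x => gradient V (γ x)) atBot (𝓝 0)) :
    ∃ z, gradient V z = 0 ∧ Tendsto γ atBot (𝓝 z) := by
  obtain ⟨z, hz, hlim⟩ := exists_tendsto_atTop_of_tendsto_gradient hV hnd
    (hγ.comp continuous_neg) (fun x => hC (-x)) (hg.comp tendsto_neg_atTop_atBot)
  exact ⟨z, hz, (hlim.comp tendsto_neg_atBot_atTop).congr fun x => congrArg γ (neg_neg x)⟩

namespace SolTW

variable {c : ℝ} {φ : ℝ → EuclideanSpace ℝ (Fin n)}

theorem hasDerivAt (hφ : SolTW V c φ) (x : ℝ) : HasDerivAt φ (deriv φ x) x :=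
  (hφ.1.differentiable (by norm_num) x).hasDerivAt

theorem hasDerivAt_deriv (hφ : SolTW V c φ) (x : ℝ) :
    HasDerivAt (deriv φ) (deriv (deriv φ) x) x :=
  hφ.1.hasDerivAt_deriv x

theorem deriv_deriv_add_smul (hφ : SolTW V c φ) (x : ℝ) :
    deriv (deriv φ) x + c • deriv φ x = gradient V (φ x) := by
  rw [hφ.2 x]
  module

theorem exists_norm_deriv_le (hV : Continuous (gradient V)) (hφ : SolTW V c φ) {C : ℝ}
    (hC : ∀ x, ‖φ x‖ ≤ C) : ∃ D, ∀ x, ‖deriv φ x‖ ≤ D := by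
  obtain ⟨M, hM⟩ := exists_norm_le_of_continuous hV C
  exact ⟨_, norm_le_of_hasDerivAt_of_norm_deriv_add_smul_le hφ.hasDerivAt hφ.hasDerivAt_deriv hC
    fun x => hφ.deriv_deriv_add_smul x ▸ hM _ (hC x)⟩

theorem exists_norm_deriv_deriv_le (hV : Continuous (gradient V)) (hφ : SolTW V c φ) {C : ℝ}
    (hC : ∀ x, ‖φ x‖ ≤ C) : ∃ D₂, ∀ x, ‖deriv (deriv φ) x‖ ≤ D₂ := by
  obtain ⟨D, hD⟩ := hφ.exists_norm_deriv_le hV hC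
  obtain ⟨M, hM⟩ := exists_norm_le_of_continuous hV C
  refine ⟨|c| * D + M, fun x => ?_⟩
  rw [hφ.2 x]
  refine (norm_add_le _ _).trans (add_le_add ?_ (hM _ (hC x)))
  rw [norm_smul, Real.norm_eq_abs, abs_neg]
  exact mul_le_mul_of_nonneg_left (hD x) (abs_nonneg c)

theorem norm_le_max_of_coercive (hV : ContDiff ℝ 2 V) {ε R : ℝ} (hε : 0 < ε)
    (hco : ∀ u, R ≤ ‖u‖ → ε * ‖u‖ ^ 2 ≤ ⟪u, gradient V u⟫) (hφ : SolTW V c φ) {B : ℝ}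
    (hB : ∀ x, ‖φ x‖ ≤ B) (x : ℝ) : ‖φ x‖ ≤ max R 1 := by
  obtain ⟨D, hD⟩ := hφ.exists_norm_deriv_le (contDiff_gradient hV).continuous hB
  set C := max R 1
  have hC : 0 < C := lt_max_of_lt_right one_pos
  have hρ : ∀ x, HasDerivAt (fun y => ‖φ y‖ ^ 2) (2 * ⟪φ x, deriv φ x⟫) x :=
    fun x => (hφ.hasDerivAt x).norm_sq
  have hρ' : ∀ x, HasDerivAt (fun y => 2 * ⟪φ y, deriv φ y⟫)
      (2 * (⟪φ x, deriv (deriv φ) x⟫ + ‖deriv φ x‖ ^ 2)) x := fun x => by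
    simpa [real_inner_self_eq_norm_sq] using
      ((hφ.hasDerivAt x).inner ℝ (hφ.hasDerivAt_deriv x)).const_mul 2
  have hA : ∀ x, |2 * ⟪φ x, deriv φ x⟫ + c * ‖φ x‖ ^ 2| ≤ 2 * B * D + |c| * B ^ 2 := by
    intro x
    have h1 : |⟪φ x, deriv φ x⟫| ≤ B * D := (abs_real_inner_le_norm _ _).trans
      (mul_le_mul (hB x) (hD x) (norm_nonneg _) ((norm_nonneg _).trans (hB x)))
    have h2 : ‖φ x‖ ^ 2 ≤ B ^ 2 := pow_le_pow_left₀ (norm_nonneg _) (hB x) 2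
    calc |2 * ⟪φ x, deriv φ x⟫ + c * ‖φ x‖ ^ 2|
        ≤ |2 * ⟪φ x, deriv φ x⟫| + |c * ‖φ x‖ ^ 2| := abs_add_le _ _
      _ = 2 * |⟪φ x, deriv φ x⟫| + |c| * ‖φ x‖ ^ 2 := by
          rw [abs_mul, abs_mul, abs_two, abs_of_nonneg (sq_nonneg ‖φ x‖)]
      _ ≤ 2 * B * D + |c| * B ^ 2 := by
          rw [mul_assoc]
          gcongr
  have hgrowth : ∀ x, C ^ 2 < ‖φ x‖ ^ 2 → 2 * ε * C ^ 2 ≤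
      2 * (⟪φ x, deriv (deriv φ) x⟫ + ‖deriv φ x‖ ^ 2) + c * (2 * ⟪φ x, deriv φ x⟫) := by
    intro x hx
    have hCx : C ≤ ‖φ x‖ := (pow_le_pow_iff_left₀ hC.le (norm_nonneg _) two_ne_zero).1 hx.le
    have hcoφ := hco (φ x) ((le_max_left R 1).trans hCx)
    have hinner : ⟪φ x, deriv (deriv φ) x⟫ + c * ⟪φ x, deriv φ x⟫ = ⟪φ x, gradient V (φ x)⟫ := by
      rw [← hφ.deriv_deriv_add_smul x, inner_add_right, real_inner_smul_right]
    nlinarith [sq_nonneg ‖deriv φ x‖]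
  have := le_of_le_deriv2_add_mul_deriv (by positivity) hρ hρ' hA hgrowth x
  exact (pow_le_pow_iff_left₀ (norm_nonneg _) hC.le two_ne_zero).1 this

theorem hasDerivAt_waveEnergy (hV : Differentiable ℝ V) (hφ : SolTW V c φ) (x : ℝ) :
    HasDerivAt (waveEnergy V φ) (-c * ‖deriv φ x‖ ^ 2) x := by
  refine (((hφ.hasDerivAt_deriv x).norm_sq.div_const 2).fun_sub
    ((hφ.hasDerivAt x).comp_inner_gradient hV)).congr_deriv ?_
  rw [hφ.2 x, inner_add_right, real_inner_smul_right, real_inner_self_eq_norm_sq,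
    real_inner_comm (deriv φ x)]
  ring

theorem antitone_waveEnergy (hV : Differentiable ℝ V) (hc : 0 ≤ c) (hφ : SolTW V c φ) :
    Antitone (waveEnergy V φ) :=
  antitone_of_hasDerivAt_nonpos (f' := fun x => -c * ‖deriv φ x‖ ^ 2)
    (hφ.hasDerivAt_waveEnergy hV) fun _ =>
      mul_nonpos_of_nonpos_of_nonneg (neg_nonpos.2 hc) (sq_nonneg _)

theorem exists_abs_waveEnergy_le (hV : ContDiff ℝ 2 V) (hφ : SolTW V c φ) {C : ℝ}
    (hC : ∀ x, ‖φ x‖ ≤ C) : ∃ M, ∀ x, |waveEnergy V φ x| ≤ M := by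
  obtain ⟨D, hD⟩ := hφ.exists_norm_deriv_le (contDiff_gradient hV).continuous hC
  obtain ⟨MV, hMV⟩ := exists_norm_le_of_continuous hV.continuous C
  refine ⟨D ^ 2 / 2 + MV, fun x => ?_⟩
  have h1 : ‖deriv φ x‖ ^ 2 ≤ D ^ 2 := pow_le_pow_left₀ (norm_nonneg _) (hD x) 2
  have h2 := abs_le.1 (Real.norm_eq_abs (V (φ x)) ▸ hMV _ (hC x))
  rw [abs_le, waveEnergy]
  constructor <;> nlinarith [sq_nonneg ‖deriv φ x‖]

theorem tendsto_deriv_zero_of_tendsto_waveEnergy (hV : ContDiff ℝ 2 V) (hc : c ≠ 0)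
    (hφ : SolTW V c φ) {C : ℝ} (hC : ∀ x, ‖φ x‖ ≤ C) {l : Filter ℝ}
    (hl : ∀ h, Tendsto (· + h) l l) {L : ℝ} (hL : Tendsto (waveEnergy V φ) l (𝓝 L)) :
    Tendsto (deriv φ) l (𝓝 0) := by
  have hgrad := (contDiff_gradient hV).continuous
  obtain ⟨D, hD⟩ := hφ.exists_norm_deriv_le hgrad hC
  obtain ⟨D₂, hD₂⟩ := hφ.exists_norm_deriv_deriv_le hgrad hC
  have hUC : UniformContinuous ((fun v => -c * ‖v‖ ^ 2) ∘ deriv φ) :=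
    (continuous_const.mul (continuous_norm.pow 2)).comp_uniformContinuous_of_norm_le
      (uniformContinuous_of_hasDerivAt_of_norm_le hφ.hasDerivAt_deriv hD₂) hD
  have h := (tendsto_zero_of_hasDerivAt_of_uniformContinuous hl
    (hφ.hasDerivAt_waveEnergy (hV.differentiable (by norm_num))) hUC hL).const_mul (-c⁻¹)
  have hsq : Tendsto (fun x => ‖deriv φ x‖ ^ 2) l (𝓝 0) := by
    simpa [← mul_assoc, hc] using h
  simpa using tendsto_zero_iff_norm_tendsto_zero.2 (by simpa using hsq.sqrt)

theorem tendsto_deriv_zero (hV : ContDiff ℝ 2 V) (hc : 0 < c) (hφ : SolTW V c φ) {C : ℝ}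
    (hC : ∀ x, ‖φ x‖ ≤ C) :
    Tendsto (deriv φ) atTop (𝓝 0) ∧ Tendsto (deriv φ) atBot (𝓝 0) := by
  have hanti := hφ.antitone_waveEnergy (hV.differentiable (by norm_num)) hc.le
  obtain ⟨M, hM⟩ := hφ.exists_abs_waveEnergy_le hV hC
  have hbdd : BddBelow (range (waveEnergy V φ)) ∧ BddAbove (range (waveEnergy V φ)) :=
    ⟨⟨-M, by rintro _ ⟨x, rfl⟩; exact (abs_le.1 (hM x)).1⟩,
      ⟨M, by rintro _ ⟨x, rfl⟩; exact (abs_le.1 (hM x)).2⟩⟩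
  exact ⟨hφ.tendsto_deriv_zero_of_tendsto_waveEnergy hV hc.ne' hC
      (fun h => tendsto_atTop_add_const_right _ h tendsto_id) (tendsto_atTop_ciInf hanti hbdd.1),
    hφ.tendsto_deriv_zero_of_tendsto_waveEnergy hV hc.ne' hC
      (fun h => tendsto_atBot_add_const_right _ h tendsto_id) (tendsto_atBot_ciSup hanti hbdd.2)⟩

theorem tendsto_gradient_zero (hV : ContDiff ℝ 2 V) (hφ : SolTW V c φ) {C : ℝ}
    (hC : ∀ x, ‖φ x‖ ≤ C) {l : Filter ℝ} (hl : ∀ h, Tendsto (· + h) l l)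
    (h' : Tendsto (deriv φ) l (𝓝 0)) : Tendsto (fun x => gradient V (φ x)) l (𝓝 0) := by
  have hgrad := (contDiff_gradient hV).continuous
  obtain ⟨D, hD⟩ := hφ.exists_norm_deriv_le hgrad hC
  obtain ⟨D₂, hD₂⟩ := hφ.exists_norm_deriv_deriv_le hgrad hC
  have hUCφ' := uniformContinuous_of_hasDerivAt_of_norm_le hφ.hasDerivAt_deriv hD₂
  have hUCgrad : UniformContinuous (gradient V ∘ φ) := hgrad.comp_uniformContinuous_of_norm_le
    (uniformContinuous_of_hasDerivAt_of_norm_le hφ.hasDerivAt hD) hC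
  have hUC : UniformContinuous (deriv (deriv φ)) := by
    rw [show deriv (deriv φ) = fun x => (-c) • deriv φ x + gradient V (φ x) from funext hφ.2]
    exact (hUCφ'.const_smul (-c)).add hUCgrad
  have h'' := tendsto_zero_of_hasDerivAt_of_uniformContinuous hl hφ.hasDerivAt_deriv hUC h'
  simpa [hφ.deriv_deriv_add_smul] using h''.add (h'.const_smul c)

theorem potential_lt (hV : ContDiff ℝ 2 V) (hc : 0 < c) (hφ : SolTW V c φ)
    (h'top : Tendsto (deriv φ) atTop (𝓝 0)) (h'bot : Tendsto (deriv φ) atBot (𝓝 0))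
    {um up : EuclideanSpace ℝ (Fin n)} (hum : Tendsto φ atBot (𝓝 um))
    (hup : Tendsto φ atTop (𝓝 up)) (hnc : ∃ x y, φ x ≠ φ y) : V um < V up := by
  have hVd : Differentiable ℝ V := hV.differentiable (by norm_num)
  have hanti := hφ.antitone_waveEnergy hVd hc.le
  have hlim : ∀ {l u}, Tendsto φ l (𝓝 u) → Tendsto (deriv φ) l (𝓝 0) →
      Tendsto (waveEnergy V φ) l (𝓝 (-V u)) := fun hu h' => by
    unfold waveEnergy
    simpa using ((h'.norm.pow 2).div_const 2).sub ((hV.continuous.tendsto _).comp hu)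
  have hge := hanti.le_of_tendsto (hlim hup h'top)
  have hle := hanti.ge_of_tendsto (hlim hum h'bot)
  refine lt_of_le_of_ne (by linarith [hge 0, hle 0]) fun heq => ?_
  obtain ⟨x, y, hxy⟩ := hnc
  refine hxy (is_const_of_deriv_eq_zero (hφ.1.differentiable (by norm_num)) (fun t => ?_) x y)
  have hconst : waveEnergy V φ = fun _ => -V up :=
    funext fun s => le_antisymm (heq ▸ hle s) (hge s)
  have := (hφ.hasDerivAt_waveEnergy hVd t).unique (hconst ▸ hasDerivAt_const t (-V up))
  simpa [hc.ne'] using this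

end SolTW

end Potential

theorem statement4_general
    (n : ℕ) (V : EuclideanSpace ℝ (Fin n) → ℝ)
    (hV : ContDiff ℝ 2 V) (hcoerc : Hcoerc V)
    (hnondeg : ∀ u : EuclideanSpace ℝ (Fin n), gradient V u = 0 →
      ∀ w : EuclideanSpace ℝ (Fin n), w ≠ 0 → hessian V u w ≠ 0) :
    ∃ C > (0:ℝ), ∀ c : ℝ, 0 < c → ∀ φ : ℝ → EuclideanSpace ℝ (Fin n),
      SolTW V c φ → (∃ B, ∀ x : ℝ, ‖φ x‖ ≤ B) →
      (∀ x : ℝ, ‖φ x‖ ≤ C) ∧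
      ∃ um up : EuclideanSpace ℝ (Fin n),
        gradient V um = 0 ∧ gradient V up = 0 ∧
        Tendsto φ atBot (𝓝 um) ∧ Tendsto φ atTop (𝓝 up) ∧
        ((∃ x y, φ x ≠ φ y) → V um < V up) := by
  obtain ⟨ε, hε, R, hco⟩ := hcoerc
  refine ⟨max R 1, lt_max_of_lt_right one_pos, fun c hc φ hφ ⟨B, hB⟩ => ?_⟩
  have hC : ∀ x, ‖φ x‖ ≤ max R 1 := hφ.norm_le_max_of_coercive hV hε hco hB
  obtain ⟨h'top, h'bot⟩ := hφ.tendsto_deriv_zero hV hc hC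
  obtain ⟨up, hup, hφup⟩ := exists_tendsto_atTop_of_tendsto_gradient hV hnondeg hφ.1.continuous hC
    (hφ.tendsto_gradient_zero hV hC (fun h => tendsto_atTop_add_const_right _ h tendsto_id) h'top)
  obtain ⟨um, hum, hφum⟩ := exists_tendsto_atBot_of_tendsto_gradient hV hnondeg hφ.1.continuous hC
    (hφ.tendsto_gradient_zero hV hC (fun h => tendsto_atBot_add_const_right _ h tendsto_id) h'bot)
  exact ⟨hC, um, up, hum, hup, hφum, hφup, hφ.potential_lt hV hc h'top h'bot hφum hφup⟩

/-- Travelling waves approach critical points. -/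
theorem statement4
    (n : ℕ) (hn : 1 ≤ n) (V : EuclideanSpace ℝ (Fin n) → ℝ)
    (hV : ContDiff ℝ 2 V) (hcoerc : Hcoerc V)
    (hnondeg : ∀ u : EuclideanSpace ℝ (Fin n), gradient V u = 0 →
      ∀ w : EuclideanSpace ℝ (Fin n), w ≠ 0 → hessian V u w ≠ 0) :
    ∃ C > (0:ℝ), ∀ c : ℝ, 0 < c → ∀ φ : ℝ → EuclideanSpace ℝ (Fin n),
      SolTW V c φ → (∃ B, ∀ x : ℝ, ‖φ x‖ ≤ B) →
      (∀ x : ℝ, ‖φ x‖ ≤ C) ∧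
      ∃ um up : EuclideanSpace ℝ (Fin n),
        gradient V um = 0 ∧ gradient V up = 0 ∧
        Tendsto φ atBot (𝓝 um) ∧ Tendsto φ atTop (𝓝 up) ∧
        ((∃ x y, φ x ≠ φ y) → V um < V up) :=
  statement4_general n V hV hcoerc hnondeg

end
end

section
/- Let V : ℝ^n → ℝ be of class C², let c ∈ ℝ, let I ⊆ (0,+∞) be an open interval, and let v : ℝ × I → ℝ^n be a smooth solution of v_t − c v_y = −∇V(v) + v_yy whose partial derivatives up to order three are bounded on ℝ × J for every compact subinterval J of I, with v itself bounded. Let ψ : ℝ × I → ℝ be smooth and such that for every compact subinterval J of I there is an integrable function g : ℝ → ℝ with |ψ(y,t)| + |ψ_y(y,t)| + |ψ_t(y,t)| ≤ g(y) for all y ∈ ℝ and t ∈ J. Then the function t ↦ ∫_ℝ ψ(y,t) ( |v_y(y,t)|²/2 + V(v(y,t)) ) dy is differentiable on I and, for every t ∈ I, d/dt ∫_ℝ ψ ( |v_y|²/2 + V(v) ) dy = ∫_ℝ [ −ψ |v_t|² + ψ_t ( |v_y|²/2 + V(v) ) + (cψ − ψ_y) v_y · v_t ] dy. -/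
open Filter Topology Set MeasureTheory Real

noncomputable section

variable {n : ℕ}

/-!
Differentiate under the integral sign. On a compact time interval around `t` the weights `ψ`,
`ψ_y`, `ψ_t` are dominated by an integrable `g`, while `v_y`, `v_t`, `v_yy`, `v_yt`, `V(v)` and
`∇V(v)` are bounded, so the derivative of `∫ ψ e`, with `e = |v_y|²/2 + V(v)`, is
`∫ ψ_t e + ψ (v_y·v_yt + ∇V(v)·v_t)`. The equation turns `∇V(v)·v_t` into
`v_yy·v_t + c v_y·v_t - |v_t|²`; what then remains beside the claimed integrand is
`ψ_y v_y·v_t + ψ (v_yy·v_t + v_y·v_ty) = ∂_y (ψ v_y·v_t)`, the derivative of an integrable function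
with integrable derivative, so its integral over `ℝ` vanishes.
-/

open Function Metric
open scoped RealInnerProductSpace

section PartialDerivatives

variable {E : Type*} [NormedAddCommGroup E] [NormedSpace ℝ E] {f : ℝ × ℝ → E}
  {U : Set (ℝ × ℝ)} {p : ℝ × ℝ}

def partialFst (f : ℝ × ℝ → E) (p : ℝ × ℝ) : E := fderiv ℝ f p (1, 0)

def partialSnd (f : ℝ × ℝ → E) (p : ℝ × ℝ) : E := fderiv ℝ f p (0, 1)

notation "∂₁" => partialFst
notation "∂₂" => partialSnd

lemma hasDerivAt_partialFst {y t : ℝ} (hf : DifferentiableAt ℝ f (y, t)) :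
    HasDerivAt (fun z => f (z, t)) (∂₁ f (y, t)) y :=
  hf.hasFDerivAt.comp_hasDerivAt y ((hasDerivAt_id y).prodMk (hasDerivAt_const y t))

lemma hasDerivAt_partialSnd {y t : ℝ} (hf : DifferentiableAt ℝ f (y, t)) :
    HasDerivAt (fun s => f (y, s)) (∂₂ f (y, t)) t :=
  hf.hasFDerivAt.comp_hasDerivAt t ((hasDerivAt_const t y).prodMk (hasDerivAt_id t))

lemma norm_partialFst_le (f : ℝ × ℝ → E) (p : ℝ × ℝ) : ‖∂₁ f p‖ ≤ ‖fderiv ℝ f p‖ := by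
  simpa [partialFst] using (fderiv ℝ f p).le_opNorm (1, 0)

lemma norm_partialSnd_le (f : ℝ × ℝ → E) (p : ℝ × ℝ) : ‖∂₂ f p‖ ≤ ‖fderiv ℝ f p‖ := by
  simpa [partialSnd] using (fderiv ℝ f p).le_opNorm (0, 1)

lemma ContDiffOn.partialFst {m n : WithTop ℕ∞} (hf : ContDiffOn ℝ n f U) (hU : IsOpen U)
    (hmn : m + 1 ≤ n) : ContDiffOn ℝ m (∂₁ f) U :=
  (hf.fderiv_of_isOpen hU hmn).clm_apply contDiffOn_const

lemma ContDiffOn.partialSnd {m n : WithTop ℕ∞} (hf : ContDiffOn ℝ n f U) (hU : IsOpen U)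
    (hmn : m + 1 ≤ n) : ContDiffOn ℝ m (∂₂ f) U :=
  (hf.fderiv_of_isOpen hU hmn).clm_apply contDiffOn_const

lemma fderiv_fderiv_apply_const (h : DifferentiableAt ℝ (fderiv ℝ f) p) (u u' : ℝ × ℝ) :
    fderiv ℝ (fun q => fderiv ℝ f q u) p u' = fderiv ℝ (fderiv ℝ f) p u' u := by
  rw [fderiv_clm_apply h (differentiableAt_const u)]
  simp

lemma norm_partialFst_partialFst_le (h : DifferentiableAt ℝ (fderiv ℝ f) p) :
    ‖∂₁ (∂₁ f) p‖ ≤ ‖fderiv ℝ (fderiv ℝ f) p‖ := by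
  unfold partialFst
  simpa [fderiv_fderiv_apply_const h] using
    (fderiv ℝ (fderiv ℝ f) p).le_opNorm₂ (1, 0) (1, 0)

lemma norm_partialSnd_partialFst_le (h : DifferentiableAt ℝ (fderiv ℝ f) p) :
    ‖∂₂ (∂₁ f) p‖ ≤ ‖fderiv ℝ (fderiv ℝ f) p‖ := by
  unfold partialFst partialSnd
  simpa [fderiv_fderiv_apply_const h] using
    (fderiv ℝ (fderiv ℝ f) p).le_opNorm₂ (0, 1) (1, 0)

lemma ContDiffAt.differentiableAt_fderiv (hf : ContDiffAt ℝ 2 f p) :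
    DifferentiableAt ℝ (fderiv ℝ f) p :=
  (hf.fderiv_right (m := 1) le_rfl).differentiableAt one_ne_zero

lemma norm_partials_le_of_norm_iteratedFDeriv_le {C : ℝ}
    (hf : ContDiffAt ℝ 2 f p) (h₁ : ‖iteratedFDeriv ℝ 1 f p‖ ≤ C)
    (h₂ : ‖iteratedFDeriv ℝ 2 f p‖ ≤ C) :
    ‖∂₁ f p‖ ≤ C ∧ ‖∂₂ f p‖ ≤ C ∧ ‖∂₁ (∂₁ f) p‖ ≤ C ∧ ‖∂₂ (∂₁ f) p‖ ≤ C := by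
  rw [norm_iteratedFDeriv_one] at h₁
  rw [← norm_iteratedFDeriv_fderiv (n := 1), norm_iteratedFDeriv_one] at h₂
  exact ⟨(norm_partialFst_le f p).trans h₁, (norm_partialSnd_le f p).trans h₁,
    (norm_partialFst_partialFst_le hf.differentiableAt_fderiv).trans h₂,
    (norm_partialSnd_partialFst_le hf.differentiableAt_fderiv).trans h₂⟩

lemma partialFst_partialSnd_comm (hf : ContDiffAt ℝ 2 f p) :
    ∂₁ (∂₂ f) p = ∂₂ (∂₁ f) p := by
  unfold partialFst partialSnd
  rw [fderiv_fderiv_apply_const hf.differentiableAt_fderiv,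
    fderiv_fderiv_apply_const hf.differentiableAt_fderiv]
  exact hf.isSymmSndFDerivAt (by simp) _ _

lemma ContDiffOn.differentiableAt_univ_prod {T : Set ℝ} {n : WithTop ℕ∞}
    (hf : ContDiffOn ℝ n f (univ ×ˢ T)) (hT : IsOpen T) (hn : n ≠ 0) {y τ : ℝ} (hτ : τ ∈ T) :
    DifferentiableAt ℝ f (y, τ) :=
  (hf.differentiableOn hn).differentiableAt ((isOpen_univ.prod hT).mem_nhds ⟨trivial, hτ⟩)

lemma deriv_slices_eq_partials {f : ℝ → ℝ → E} {T : Set ℝ} (hT : IsOpen T)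
    (hf : ContDiffOn ℝ 2 (uncurry f) (univ ×ˢ T)) {τ : ℝ} (hτ : τ ∈ T) (y : ℝ) :
    deriv (fun z => f z τ) y = ∂₁ (uncurry f) (y, τ) ∧
      deriv (fun s => f y s) τ = ∂₂ (uncurry f) (y, τ) ∧
      deriv (deriv fun z => f z τ) y = ∂₁ (∂₁ (uncurry f)) (y, τ) := by
  have hdiff := hf.differentiableAt_univ_prod hT two_ne_zero hτ (y := y)
  refine ⟨(hasDerivAt_partialFst hdiff).deriv, (hasDerivAt_partialSnd hdiff).deriv, ?_⟩
  rw [show deriv (fun z => f z τ) = fun z => ∂₁ (uncurry f) (z, τ) from funext fun z =>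
    (hasDerivAt_partialFst (hf.differentiableAt_univ_prod hT two_ne_zero hτ)).deriv]
  have hf₁ : ContDiffOn ℝ 1 (∂₁ (uncurry f)) (univ ×ˢ T) :=
    hf.partialFst (isOpen_univ.prod hT) le_rfl
  exact (hasDerivAt_partialFst (hf₁.differentiableAt_univ_prod hT one_ne_zero hτ)).deriv

lemma ContinuousOn.continuous_slice {F : Type*} [TopologicalSpace F] {g : ℝ × ℝ → F}
    {T : Set ℝ} (hg : ContinuousOn g (univ ×ˢ T)) {t : ℝ} (ht : t ∈ T) :
    Continuous fun y => g (y, t) :=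
  hg.comp_continuous (continuous_id.prodMk continuous_const) fun _ => ⟨trivial, ht⟩

end PartialDerivatives

theorem integral_deriv_mul_add_mul_deriv_eq_zero {φ φ' q q' : ℝ → ℝ} {K : ℝ}
    (hφ : ∀ y, HasDerivAt φ (φ' y) y) (hq : ∀ y, HasDerivAt q (q' y) y)
    (hφ_int : Integrable φ) (hφ'_int : Integrable φ')
    (hqK : ∀ y, |q y| ≤ K) (hq'K : ∀ y, |q' y| ≤ K) :
    Integrable (fun y => φ' y * q y + φ y * q' y) ∧ ∫ y, φ' y * q y + φ y * q' y = 0 := by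
  have hq_meas : AEStronglyMeasurable q :=
    (continuous_iff_continuousAt.2 fun y => (hq y).continuousAt).aestronglyMeasurable
  have hq'_meas : AEStronglyMeasurable q' := by
    rw [show q' = deriv q from funext fun y => (hq y).deriv.symm]
    exact (measurable_deriv q).aestronglyMeasurable
  have h_int : Integrable fun y => φ' y * q y + φ y * q' y :=
    (hφ'_int.mul_bdd hq_meas (ae_of_all _ hqK)).add (hφ_int.mul_bdd hq'_meas (ae_of_all _ hq'K))
  exact ⟨h_int, integral_eq_zero_of_hasDerivAt_of_integrable (fun y => (hφ y).mul (hq y)) h_int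
    (hφ_int.mul_bdd hq_meas (ae_of_all _ hqK))⟩

theorem hasDerivAt_integral_mul {φ φ' e e' : ℝ → ℝ → ℝ} {g : ℝ → ℝ} {T : Set ℝ} {t K : ℝ}
    (hT : T ∈ 𝓝 t)
    (hφ : ∀ y, ∀ τ ∈ T, HasDerivAt (φ y) (φ' y τ) τ)
    (he : ∀ y, ∀ τ ∈ T, HasDerivAt (e y) (e' y τ) τ)
    (hφ_meas : ∀ τ ∈ T, AEStronglyMeasurable fun y => φ y τ)
    (he_meas : ∀ τ ∈ T, AEStronglyMeasurable fun y => e y τ)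
    (hφ'_meas : AEStronglyMeasurable fun y => φ' y t)
    (he'_meas : AEStronglyMeasurable fun y => e' y t)
    (hg : Integrable g) (hφg : ∀ y, ∀ τ ∈ T, |φ y τ| ≤ g y ∧ |φ' y τ| ≤ g y)
    (heK : ∀ y, ∀ τ ∈ T, |e y τ| ≤ K ∧ |e' y τ| ≤ K) :
    Integrable (fun y => φ' y t * e y t + φ y t * e' y t) ∧
      HasDerivAt (fun τ => ∫ y, φ y τ * e y τ) (∫ y, φ' y t * e y t + φ y t * e' y t) t := by
  have ht : t ∈ T := mem_of_mem_nhds hT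
  have hF_int : Integrable fun y => φ y t * e y t :=
    (hg.mono' (hφ_meas t ht) (ae_of_all _ fun y => (hφg y t ht).1)).mul_bdd (he_meas t ht)
      (ae_of_all _ fun y => (heK y t ht).1)
  refine hasDerivAt_integral_of_dominated_loc_of_deriv_le (F := fun τ y => φ y τ * e y τ)
    (F' := fun τ y => φ' y τ * e y τ + φ y τ * e' y τ)
    (bound := fun y => 2 * K * g y) hT ?_ hF_int ?_ ?_ (hg.const_mul _) ?_
  · filter_upwards [hT] with τ hτ using (hφ_meas τ hτ).mul (he_meas τ hτ)
  · exact (hφ'_meas.mul (he_meas t ht)).add ((hφ_meas t ht).mul he'_meas)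
  · refine ae_of_all _ fun y τ hτ => ?_
    obtain ⟨hφ_le, hφ'_le⟩ := hφg y τ hτ
    obtain ⟨he_le, he'_le⟩ := heK y τ hτ
    have hg0 : 0 ≤ g y := (abs_nonneg _).trans hφ_le
    calc ‖φ' y τ * e y τ + φ y τ * e' y τ‖ ≤ |φ' y τ| * |e y τ| + |φ y τ| * |e' y τ| := by
          rw [Real.norm_eq_abs, ← abs_mul, ← abs_mul]; exact abs_add_le _ _
      _ ≤ g y * K + g y * K := by gcongr
      _ = 2 * K * g y := by ring
  · exact ae_of_all _ fun y τ hτ => (hφ y τ hτ).mul (he y τ hτ)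

section LocalizedEnergy

variable {E : Type*} [NormedAddCommGroup E] [InnerProductSpace ℝ E]

lemma abs_real_inner_le_sq {a b : E} {M : ℝ} (ha : ‖a‖ ≤ M) (hb : ‖b‖ ≤ M) : |⟪a, b⟫| ≤ M ^ 2 :=
  (abs_real_inner_le_norm a b).trans (by nlinarith [norm_nonneg a, norm_nonneg b])

lemma inner_eq_of_sub_smul_eq {c : ℝ} {a b a₁ G : E} (h : b - c • a = -G + a₁) :
    ⟪G, b⟫ = ⟪a₁, b⟫ + c * ⟪a, b⟫ - ‖b‖ ^ 2 := by
  have hG : G = a₁ + c • a - b := by linear_combination (norm := module) h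
  rw [hG, inner_sub_left, inner_add_left, real_inner_smul_left, real_inner_self_eq_norm_sq]

variable {w : ℝ × ℝ → E} {Ψ : ℝ × ℝ → ℝ} {T : Set ℝ} {g : ℝ → ℝ} {M t : ℝ}

theorem integral_flux_deriv_eq_zero (hT : IsOpen T)
    (hw : ContDiffOn ℝ 2 w (univ ×ˢ T)) (hΨ : ContDiffOn ℝ 1 Ψ (univ ×ˢ T)) (ht : t ∈ T)
    (hwM : ∀ y, ‖∂₁ w (y, t)‖ ≤ M ∧ ‖∂₂ w (y, t)‖ ≤ M ∧
      ‖∂₁ (∂₁ w) (y, t)‖ ≤ M ∧ ‖∂₂ (∂₁ w) (y, t)‖ ≤ M)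
    (hg : Integrable g) (hΨg : ∀ y, |Ψ (y, t)| ≤ g y ∧ |∂₁ Ψ (y, t)| ≤ g y) :
    Integrable (fun y => ∂₁ Ψ (y, t) * ⟪∂₁ w (y, t), ∂₂ w (y, t)⟫ +
        Ψ (y, t) * (⟪∂₁ w (y, t), ∂₂ (∂₁ w) (y, t)⟫ + ⟪∂₁ (∂₁ w) (y, t), ∂₂ w (y, t)⟫)) ∧
    ∫ y, ∂₁ Ψ (y, t) * ⟪∂₁ w (y, t), ∂₂ w (y, t)⟫ +
        Ψ (y, t) * (⟪∂₁ w (y, t), ∂₂ (∂₁ w) (y, t)⟫ + ⟪∂₁ (∂₁ w) (y, t), ∂₂ w (y, t)⟫) = 0 := by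
  have hU : IsOpen ((univ : Set ℝ) ×ˢ T) := isOpen_univ.prod hT
  have hw₁ : ContDiffOn ℝ 1 (∂₁ w) (univ ×ˢ T) := hw.partialFst hU le_rfl
  have hw₂ : ContDiffOn ℝ 1 (∂₂ w) (univ ×ˢ T) := hw.partialSnd hU le_rfl
  have hflux : ∀ y, HasDerivAt (fun z => ⟪∂₁ w (z, t), ∂₂ w (z, t)⟫)
      (⟪∂₁ w (y, t), ∂₂ (∂₁ w) (y, t)⟫ + ⟪∂₁ (∂₁ w) (y, t), ∂₂ w (y, t)⟫) y := fun y => by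
    rw [← partialFst_partialSnd_comm (hw.contDiffAt (hU.mem_nhds ⟨trivial, ht⟩))]
    exact (hasDerivAt_partialFst (hw₁.differentiableAt_univ_prod hT one_ne_zero ht)).inner ℝ
      (hasDerivAt_partialFst (hw₂.differentiableAt_univ_prod hT one_ne_zero ht))
  refine integral_deriv_mul_add_mul_deriv_eq_zero (K := 2 * M ^ 2)
    (fun y => hasDerivAt_partialFst (hΨ.differentiableAt_univ_prod hT one_ne_zero ht)) hflux
    (hg.mono' (hΨ.continuousOn.continuous_slice ht).aestronglyMeasurable
      (ae_of_all _ fun y => (hΨg y).1))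
    (hg.mono' ((hΨ.partialFst (m := 0) hU (by simp)).continuousOn.continuous_slice
      ht).aestronglyMeasurable (ae_of_all _ fun y => (hΨg y).2))
    (fun y => ?_) (fun y => ?_)
  all_goals obtain ⟨h₁, h₂, h₁₁, h₂₁⟩ := hwM y
  · linarith [abs_real_inner_le_sq h₁ h₂, sq_nonneg M]
  · have := abs_add_le ⟪∂₁ w (y, t), ∂₂ (∂₁ w) (y, t)⟫ ⟪∂₁ (∂₁ w) (y, t), ∂₂ w (y, t)⟫
    linarith [abs_real_inner_le_sq h₁ h₂₁, abs_real_inner_le_sq h₁₁ h₂]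

variable [CompleteSpace E] {V : E → ℝ}

lemma ContDiff.continuous_gradient (hV : ContDiff ℝ 1 V) : Continuous (gradient V) :=
  (InnerProductSpace.toDual ℝ E).symm.continuous.comp (hV.continuous_fderiv one_ne_zero)

lemma ContDiff.exists_abs_le_and_norm_gradient_le [ProperSpace E] (hV : ContDiff ℝ 1 V) (R : ℝ) :
    ∃ K, ∀ u : E, ‖u‖ ≤ R → |V u| ≤ K ∧ ‖gradient V u‖ ≤ K := by
  obtain ⟨K₀, hK₀⟩ := (isCompact_closedBall (0 : E) R).exists_bound_of_continuousOn
    hV.continuous.continuousOn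
  obtain ⟨K₁, hK₁⟩ := (isCompact_closedBall (0 : E) R).exists_bound_of_continuousOn
    hV.continuous_gradient.continuousOn
  refine ⟨max K₀ K₁, fun u hu => ?_⟩
  have hmem : u ∈ closedBall 0 R := mem_closedBall_zero_iff.2 hu
  exact ⟨(hK₀ u hmem).trans (le_max_left _ _), (hK₁ u hmem).trans (le_max_right _ _)⟩

def energyDensity (V : E → ℝ) (w : ℝ × ℝ → E) (p : ℝ × ℝ) : ℝ :=
  ‖∂₁ w p‖ ^ 2 / 2 + V (w p)

lemma hasDerivAt_energyDensity (hV : Differentiable ℝ V) {y τ : ℝ}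
    (hw : DifferentiableAt ℝ w (y, τ)) (hw₁ : DifferentiableAt ℝ (∂₁ w) (y, τ)) :
    HasDerivAt (fun s => energyDensity V w (y, s))
      (⟪∂₁ w (y, τ), ∂₂ (∂₁ w) (y, τ)⟫ + ⟪gradient V (w (y, τ)), ∂₂ w (y, τ)⟫) τ := by
  have hVw := (hV (w (y, τ))).hasFDerivAt.comp_hasDerivAt τ (hasDerivAt_partialSnd hw)
  rw [← inner_gradient_left] at hVw
  exact (((hasDerivAt_partialSnd hw₁).norm_sq.div_const 2).add hVw).congr_deriv (by ring)

theorem hasDerivAt_integral_mul_energyDensity (hV : ContDiff ℝ 1 V) (hT : IsOpen T)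
    (hw : ContDiffOn ℝ 2 w (univ ×ˢ T)) (hΨ : ContDiffOn ℝ 1 Ψ (univ ×ˢ T))
    (hwM : ∀ y, ∀ τ ∈ T, ‖∂₁ w (y, τ)‖ ≤ M ∧ ‖∂₂ w (y, τ)‖ ≤ M ∧
      ‖∂₁ (∂₁ w) (y, τ)‖ ≤ M ∧ ‖∂₂ (∂₁ w) (y, τ)‖ ≤ M)
    (hVM : ∀ y, ∀ τ ∈ T, |V (w (y, τ))| ≤ M ∧ ‖gradient V (w (y, τ))‖ ≤ M)
    (hg : Integrable g) (hΨg : ∀ y, ∀ τ ∈ T, |Ψ (y, τ)| ≤ g y ∧ |∂₂ Ψ (y, τ)| ≤ g y)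
    (ht : t ∈ T) :
    Integrable (fun y => ∂₂ Ψ (y, t) * energyDensity V w (y, t) +
        Ψ (y, t) * (⟪∂₁ w (y, t), ∂₂ (∂₁ w) (y, t)⟫ + ⟪gradient V (w (y, t)), ∂₂ w (y, t)⟫)) ∧
    HasDerivAt (fun τ => ∫ y, Ψ (y, τ) * energyDensity V w (y, τ))
      (∫ y, ∂₂ Ψ (y, t) * energyDensity V w (y, t) +
        Ψ (y, t) * (⟪∂₁ w (y, t), ∂₂ (∂₁ w) (y, t)⟫ + ⟪gradient V (w (y, t)), ∂₂ w (y, t)⟫)) t := by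
  have hU : IsOpen ((univ : Set ℝ) ×ˢ T) := isOpen_univ.prod hT
  have hw₁ : ContDiffOn ℝ 1 (∂₁ w) (univ ×ˢ T) := hw.partialFst hU le_rfl
  have he_cont : ContinuousOn (energyDensity V w) (univ ×ˢ T) :=
    ((hw₁.continuousOn.norm.pow 2).div_const 2).add
      (hV.continuous.comp_continuousOn hw.continuousOn)
  have he'_cont : ContinuousOn
      (fun p => ⟪∂₁ w p, ∂₂ (∂₁ w) p⟫ + ⟪gradient V (w p), ∂₂ w p⟫) (univ ×ˢ T) :=
    (hw₁.continuousOn.inner (hw₁.partialSnd (m := 0) hU (by simp)).continuousOn).add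
      ((hV.continuous_gradient.comp_continuousOn hw.continuousOn).inner
        (hw.partialSnd (m := 0) hU (by simp)).continuousOn)
  refine hasDerivAt_integral_mul (φ := fun y τ => Ψ (y, τ))
    (e := fun y τ => energyDensity V w (y, τ)) (K := 2 * M ^ 2 + M) (hT.mem_nhds ht)
    (fun y τ hτ => hasDerivAt_partialSnd (hΨ.differentiableAt_univ_prod hT one_ne_zero hτ))
    (fun y τ hτ => hasDerivAt_energyDensity (hV.differentiable one_ne_zero)
      (hw.differentiableAt_univ_prod hT two_ne_zero hτ)
      (hw₁.differentiableAt_univ_prod hT one_ne_zero hτ))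
    (fun τ hτ => (hΨ.continuousOn.continuous_slice hτ).aestronglyMeasurable)
    (fun τ hτ => (he_cont.continuous_slice hτ).aestronglyMeasurable)
    ((hΨ.partialSnd (m := 0) hU (by simp)).continuousOn.continuous_slice ht).aestronglyMeasurable
    (he'_cont.continuous_slice ht).aestronglyMeasurable hg hΨg (fun y τ hτ => ?_)
  obtain ⟨h₁, h₂, -, h₂₁⟩ := hwM y τ hτ
  obtain ⟨hV₀, hV₁⟩ := hVM y τ hτ
  have hsq : ‖∂₁ w (y, τ)‖ ^ 2 ≤ M ^ 2 := pow_le_pow_left₀ (norm_nonneg _) h₁ 2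
  have hM : 0 ≤ M := (norm_nonneg _).trans h₁
  constructor
  · have := abs_add_le (‖∂₁ w (y, τ)‖ ^ 2 / 2) (V (w (y, τ)))
    have hpos : |‖∂₁ w (y, τ)‖ ^ 2 / 2| = ‖∂₁ w (y, τ)‖ ^ 2 / 2 := abs_of_nonneg (by positivity)
    unfold energyDensity
    linarith [sq_nonneg M]
  · have := abs_add_le ⟪∂₁ w (y, τ), ∂₂ (∂₁ w) (y, τ)⟫ ⟪gradient V (w (y, τ)), ∂₂ w (y, τ)⟫
    linarith [abs_real_inner_le_sq h₁ h₂₁, abs_real_inner_le_sq hV₁ h₂]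

theorem hasDerivAt_integral_localizedEnergy [ProperSpace E] {c C R : ℝ}
    (hV : ContDiff ℝ 1 V) (hT : IsOpen T)
    (hw : ContDiffOn ℝ 2 w (univ ×ˢ T)) (hΨ : ContDiffOn ℝ 1 Ψ (univ ×ˢ T))
    (hpde : ∀ y, ∀ τ ∈ T,
      ∂₂ w (y, τ) - c • ∂₁ w (y, τ) = -gradient V (w (y, τ)) + ∂₁ (∂₁ w) (y, τ))
    (hwR : ∀ y, ∀ τ ∈ T, ‖w (y, τ)‖ ≤ R)
    (hwC : ∀ y, ∀ τ ∈ T,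
      ‖iteratedFDeriv ℝ 1 w (y, τ)‖ ≤ C ∧ ‖iteratedFDeriv ℝ 2 w (y, τ)‖ ≤ C)
    (hg : Integrable g)
    (hΨg : ∀ y, ∀ τ ∈ T, |Ψ (y, τ)| + |∂₁ Ψ (y, τ)| + |∂₂ Ψ (y, τ)| ≤ g y) (ht : t ∈ T) :
    HasDerivAt (fun τ => ∫ y, Ψ (y, τ) * energyDensity V w (y, τ))
      (∫ y, -Ψ (y, t) * ‖∂₂ w (y, t)‖ ^ 2 + ∂₂ Ψ (y, t) * energyDensity V w (y, t)
        + (c * Ψ (y, t) - ∂₁ Ψ (y, t)) * ⟪∂₁ w (y, t), ∂₂ w (y, t)⟫) t := by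
  obtain ⟨K, hK⟩ := hV.exists_abs_le_and_norm_gradient_le R
  have hwM := fun y τ (hτ : τ ∈ T) => norm_partials_le_of_norm_iteratedFDeriv_le
    (hw.contDiffAt ((isOpen_univ.prod hT).mem_nhds ⟨trivial, hτ⟩))
    ((hwC y τ hτ).1.trans (le_max_left C K)) ((hwC y τ hτ).2.trans (le_max_left C K))
  have hVM := fun y τ (hτ : τ ∈ T) => (hK _ (hwR y τ hτ)).imp
    (·.trans (le_max_right C K)) (·.trans (le_max_right C K))
  have hΨg' : ∀ y, ∀ τ ∈ T, |Ψ (y, τ)| ≤ g y ∧ |∂₁ Ψ (y, τ)| ≤ g y ∧ |∂₂ Ψ (y, τ)| ≤ g y :=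
    fun y τ hτ => by
      have := hΨg y τ hτ
      refine ⟨?_, ?_, ?_⟩ <;>
        linarith [abs_nonneg (Ψ (y, τ)), abs_nonneg (∂₁ Ψ (y, τ)), abs_nonneg (∂₂ Ψ (y, τ))]
  obtain ⟨hrate_int, hrate⟩ := hasDerivAt_integral_mul_energyDensity hV hT hw hΨ hwM hVM hg
    (fun y τ hτ => ⟨(hΨg' y τ hτ).1, (hΨg' y τ hτ).2.2⟩) ht
  obtain ⟨hflux_int, hflux⟩ := integral_flux_deriv_eq_zero hT hw hΨ ht (fun y => hwM y t ht) hg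
    (fun y => ⟨(hΨg' y t ht).1, (hΨg' y t ht).2.1⟩)
  convert hrate using 1
  refine (integral_congr_ae (ae_of_all _ fun y => ?_)).trans
    ((integral_sub hrate_int hflux_int).trans (by rw [hflux, sub_zero]))
  rw [inner_eq_of_sub_smul_eq (hpde y t ht)]
  ring

end LocalizedEnergy

theorem statement7_general
    (n : ℕ) (V : EuclideanSpace ℝ (Fin n) → ℝ) (hV : ContDiff ℝ 2 V)
    (c : ℝ) (a b : ℝ) (I : Set ℝ) (hI : I = Ioo a b)
    (v : ℝ → ℝ → EuclideanSpace ℝ (Fin n))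
    (hvsmooth : ∀ k : ℕ, ContDiffOn ℝ k (fun p : ℝ × ℝ => v p.1 p.2) (univ ×ˢ I))
    (heq : ∀ y t : ℝ, t ∈ I →
      deriv (fun s => v y s) t - c • deriv (fun z => v z t) y
        = -gradient V (v y t) + deriv (deriv (fun z => v z t)) y)
    (hvbdd : ∃ C, ∀ y t : ℝ, t ∈ I → ‖v y t‖ ≤ C)
    (hdbdd : ∀ J : Set ℝ, J ⊆ I → IsCompact J → ∃ C, ∀ y : ℝ, ∀ t ∈ J,
      ∀ i : ℕ, 1 ≤ i → i ≤ 3 →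
        ‖iteratedFDeriv ℝ i (fun p : ℝ × ℝ => v p.1 p.2) (y, t)‖ ≤ C)
    (ψ : ℝ → ℝ → ℝ)
    (hψ : ∀ k : ℕ, ContDiffOn ℝ k (fun p : ℝ × ℝ => ψ p.1 p.2) (univ ×ˢ I))
    (hψdom : ∀ J : Set ℝ, J ⊆ I → IsCompact J → ∃ g : ℝ → ℝ, Integrable g ∧
      ∀ y : ℝ, ∀ t ∈ J,
        |ψ y t| + |deriv (fun z => ψ z t) y| + |deriv (fun s => ψ y s) t| ≤ g y) :
    ∀ t ∈ I,
      HasDerivAt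
        (fun τ => ∫ y : ℝ, ψ y τ * (‖deriv (fun z => v z τ) y‖ ^ 2 / 2 + V (v y τ)))
        (∫ y : ℝ,
          (-(ψ y t) * ‖deriv (fun s => v y s) t‖ ^ 2
            + deriv (fun s => ψ y s) t * (‖deriv (fun z => v z t) y‖ ^ 2 / 2 + V (v y t))
            + (c * ψ y t - deriv (fun z => ψ z t) y) *
                (inner ℝ (deriv (fun z => v z t) y) (deriv (fun s => v y s) t) : ℝ)))
        t := by
  intro t ht
  have hIo : IsOpen I := hI ▸ isOpen_Ioo
  have hv := fun y τ (hτ : τ ∈ I) => deriv_slices_eq_partials hIo (hvsmooth 2) hτ y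
  have hψ' := fun y τ (hτ : τ ∈ I) => deriv_slices_eq_partials hIo (hψ 2) hτ y
  obtain ⟨δ, hδ, hJI⟩ := nhds_basis_closedBall.mem_iff.1 (hIo.mem_nhds ht)
  have hTI : ball t δ ⊆ I := ball_subset_closedBall.trans hJI
  obtain ⟨C, hC⟩ := hdbdd _ hJI (isCompact_closedBall t δ)
  obtain ⟨g, hg, hψg⟩ := hψdom _ hJI (isCompact_closedBall t δ)
  obtain ⟨R, hR⟩ := hvbdd
  have key := hasDerivAt_integral_localizedEnergy (w := uncurry v) (Ψ := uncurry ψ) (c := c)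
    (hV.of_le one_le_two) isOpen_ball ((hvsmooth 2).mono (prod_mono subset_rfl hTI))
    ((hψ 1).mono (prod_mono subset_rfl hTI))
    (fun y τ hτ => by
      obtain ⟨hvy, hvt, hvyy⟩ := hv y τ (hTI hτ)
      simpa [hvy, hvt, hvyy] using heq y τ (hTI hτ))
    (fun y τ hτ => hR y τ (hTI hτ))
    (fun y τ hτ => ⟨hC y τ (ball_subset_closedBall hτ) 1 le_rfl (by norm_num),
      hC y τ (ball_subset_closedBall hτ) 2 (by norm_num) (by norm_num)⟩)
    hg (fun y τ hτ => by
      simpa [(hψ' y τ (hTI hτ)).1, (hψ' y τ (hTI hτ)).2.1] using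
        hψg y τ (ball_subset_closedBall hτ))
    (mem_ball_self hδ)
  refine (key.congr_of_eventuallyEq ?_).congr_deriv ?_
  · filter_upwards [isOpen_ball.mem_nhds (mem_ball_self hδ)] with τ hτ
    refine integral_congr_ae (ae_of_all _ fun y => ?_)
    simp [energyDensity, (hv y τ (hTI hτ)).1]
  · refine integral_congr_ae (ae_of_all _ fun y => ?_)
    simp [energyDensity, (hv y t ht).1, (hv y t ht).2.1, (hψ' y t ht).1, (hψ' y t ht).2.1]

/-- Time derivative of the localized energy in a travelling frame. -/
theorem statement7
    (n : ℕ) (hn : 1 ≤ n) (V : EuclideanSpace ℝ (Fin n) → ℝ) (hV : ContDiff ℝ 2 V)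
    (c : ℝ) (a b : ℝ) (I : Set ℝ) (hI : I = Ioo a b) (hIpos : I ⊆ Ioi 0)
    (v : ℝ → ℝ → EuclideanSpace ℝ (Fin n))
    (hvsmooth : ∀ k : ℕ, ContDiffOn ℝ k (fun p : ℝ × ℝ => v p.1 p.2) (univ ×ˢ I))
    (heq : ∀ y t : ℝ, t ∈ I →
      deriv (fun s => v y s) t - c • deriv (fun z => v z t) y
        = -gradient V (v y t) + deriv (deriv (fun z => v z t)) y)
    (hvbdd : ∃ C, ∀ y t : ℝ, t ∈ I → ‖v y t‖ ≤ C)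
    (hdbdd : ∀ J : Set ℝ, J ⊆ I → IsCompact J → ∃ C, ∀ y : ℝ, ∀ t ∈ J,
      ∀ i : ℕ, 1 ≤ i → i ≤ 3 →
        ‖iteratedFDeriv ℝ i (fun p : ℝ × ℝ => v p.1 p.2) (y, t)‖ ≤ C)
    (ψ : ℝ → ℝ → ℝ)
    (hψ : ∀ k : ℕ, ContDiffOn ℝ k (fun p : ℝ × ℝ => ψ p.1 p.2) (univ ×ˢ I))
    (hψdom : ∀ J : Set ℝ, J ⊆ I → IsCompact J → ∃ g : ℝ → ℝ, Integrable g ∧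
      ∀ y : ℝ, ∀ t ∈ J,
        |ψ y t| + |deriv (fun z => ψ z t) y| + |deriv (fun s => ψ y s) t| ≤ g y) :
    ∀ t ∈ I,
      HasDerivAt
        (fun τ => ∫ y : ℝ, ψ y τ * (‖deriv (fun z => v z τ) y‖ ^ 2 / 2 + V (v y τ)))
        (∫ y : ℝ,
          (-(ψ y t) * ‖deriv (fun s => v y s) t‖ ^ 2
            + deriv (fun s => ψ y s) t * (‖deriv (fun z => v z t) y‖ ^ 2 / 2 + V (v y t))
            + (c * ψ y t - deriv (fun z => ψ z t) y) *
                (inner ℝ (deriv (fun z => v z t) y) (deriv (fun s => v y s) t) : ℝ)))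
        t :=
  statement7_general n V hV c a b I hI v hvsmooth heq hvbdd hdbdd ψ hψ hψdom

end
end

section
/- Assume V : ℝ^n → ℝ is of class C², satisfies (Hcoerc), all critical points of V are nondegenerate, 0 ∈ M and V(0) = 0. Define κ₀ = min( √(2/ρ₀), √(λ_min/2) ) and d_esc = d_Esc · √( min(ρ₀/2, 1/4) / ((1+κ₀)/2) ). Then for every bounded C¹ function w : ℝ → ℝ^n with bounded derivative and every ξ ∈ ℝ: if ∫_ℝ e^{−κ₀|x−ξ|} ( ρ₀ ( |w'(x)|²/2 + V(w(x)) ) + |w(x)|²/2 ) dx ≤ d_esc², then |w(ξ)| ≤ d_Esc. -/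
/-! Put `g = ‖w‖²`. Integrating the derivative of `e^{-κ|x-ξ|} g` over the two half-lines
`x > ξ` and `x < ξ` gives the weighted `H¹ ⊂ L^∞` estimate
`2 g(ξ) ≤ ∫ e^{-κ|x-ξ|} (κ g + |g'|) ≤ (1 + κ) ∫ e^{-κ|x-ξ|} (‖w‖² + ‖w'‖²)`.
The choice of `ρ₀` makes `ρ₀ V(u) + ‖u‖²/4 ≥ 0`, so the firewall density
`ρ₀ (‖w'‖²/2 + V(w)) + ‖w‖²/2` dominates `min(ρ₀/2, 1/4) (‖w‖² + ‖w'‖²)`, and `d_esc` is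
calibrated exactly so that the two bounds combine into `‖w(ξ)‖ ≤ d_Esc`. -/

open Filter Topology Set MeasureTheory Real

noncomputable section

variable {n : ℕ}

/-- `ρ₀ := 1 / max(1, -4 q_low)`, the weighting of the energy in the firewall
functions, defined from the convexity `q_low` of the lower quadratic hulls. -/
def rho0 (qlow : ℝ) : ℝ := 1 / max 1 (-(4 * qlow))

/-- `κ₀`, the decay rate of the weight of the firewall function in the laboratory
frame. -/
def kappa0 (qlow lamMin : ℝ) : ℝ :=
  min (Real.sqrt (2 / rho0 qlow)) (Real.sqrt (lamMin / 2))

/-- The small escape distance `d_esc`, measuring closeness to the minimum point in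
terms of the firewall function. -/
def descSmall (qlow lamMin dEsc : ℝ) : ℝ :=
  dEsc * Real.sqrt (min (rho0 qlow / 2) (1 / 4) / ((1 + kappa0 qlow lamMin) / 2))

section ExpWeight

variable {f g g' : ℝ → ℝ} {κ C ξ : ℝ}

theorem integrable_exp_neg_mul_abs_sub (hκ : 0 < κ) (ξ : ℝ) :
    Integrable fun x : ℝ => exp (-(κ * |x - ξ|)) := by
  have hIic : IntegrableOn (fun x : ℝ => exp (-|x|)) (Iic 0) :=
    (integrableOn_exp_Iic 0).congr_fun (fun x hx => by simp [abs_of_nonpos (mem_Iic.1 hx)])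
      measurableSet_Iic
  have hIoi : IntegrableOn (fun x : ℝ => exp (-|x|)) (Ioi 0) :=
    (exp_neg_integrableOn_Ioi 0 one_pos).congr_fun (fun x hx => by
      simp [abs_of_pos (mem_Ioi.1 hx)]) measurableSet_Ioi
  have h : Integrable fun x : ℝ => exp (-|x|) := by
    simpa only [Iic_union_Ioi, integrableOn_univ] using hIic.union hIoi
  simpa [abs_mul, abs_of_pos hκ] using (h.comp_mul_left' hκ.ne').comp_sub_right ξ

theorem integrable_exp_neg_mul_abs_sub_mul (hκ : 0 < κ) (hf : Continuous f)
    (hfC : ∀ x, |f x| ≤ C) : Integrable fun x => exp (-(κ * |x - ξ|)) * f x :=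
  (integrable_exp_neg_mul_abs_sub hκ ξ).mul_bdd hf.aestronglyMeasurable (ae_of_all _ hfC)

theorem integrable_exp_neg_mul_abs_sub_mul_add (hκ : 0 < κ) (hg : Continuous g)
    (hf : Continuous f) (hgC : ∀ x, |g x| ≤ C) (hfC : ∀ x, |f x| ≤ C) :
    Integrable fun x => exp (-(κ * |x - ξ|)) * (κ * g x + f x) :=
  integrable_exp_neg_mul_abs_sub_mul (C := κ * C + C) hκ ((continuous_const.mul hg).add hf)
    fun x => (abs_add_le _ _).trans <| add_le_add
      (by rw [abs_mul, abs_of_pos hκ]; exact mul_le_mul_of_nonneg_left (hgC x) hκ.le) (hfC x)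

theorem setIntegral_Ioi_exp_neg_mul_abs_sub_mul (hκ : 0 < κ)
    (hg : ∀ x, HasDerivAt g (g' x) x) (hg' : Continuous g')
    (hgC : ∀ x, |g x| ≤ C) (hg'C : ∀ x, |g' x| ≤ C) :
    ∫ x in Ioi ξ, exp (-(κ * |x - ξ|)) * (κ * g x - g' x) = g ξ := by
  have hprim : ∀ x, HasDerivAt (fun y => exp (-(κ * (y - ξ))) * g y)
      (-(exp (-(κ * (x - ξ))) * (κ * g x - g' x))) x := fun x => by
    have h := (((hasDerivAt_id' x).sub_const ξ).const_mul κ).fun_neg.exp.fun_mul (hg x)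
    exact h.congr_deriv (by ring)
  have hgc : Continuous g := continuous_iff_continuousAt.2 fun x => (hg x).continuousAt
  have hint : IntegrableOn (fun x => exp (-(κ * |x - ξ|)) * (κ * g x - g' x)) (Ioi ξ) := by
    simpa only [Pi.neg_apply, ← sub_eq_add_neg] using
      (integrable_exp_neg_mul_abs_sub_mul_add hκ hgc hg'.neg hgC
        fun x => (abs_neg (g' x)).trans_le (hg'C x)).integrableOn
  have habs : EqOn (fun x => exp (-(κ * |x - ξ|)) * (κ * g x - g' x))
      (fun x => exp (-(κ * (x - ξ))) * (κ * g x - g' x)) (Ioi ξ) := fun x hx => by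
    simp only [abs_of_pos (sub_pos.2 (mem_Ioi.1 hx))]
  have hlim : Tendsto (fun y => exp (-(κ * (y - ξ))) * g y) atTop (𝓝 0) := by
    have hlin : Tendsto (fun y => κ * (y - ξ)) atTop atTop := by
      simpa only [sub_eq_add_neg, id] using
        (tendsto_atTop_add_const_right atTop (-ξ) tendsto_id).const_mul_atTop hκ
    exact (tendsto_exp_neg_atTop_nhds_zero.comp hlin).zero_mul_isBoundedUnder_le
      (isBoundedUnder_of ⟨C, fun y => hgC y⟩)
  rw [setIntegral_congr_fun measurableSet_Ioi habs]
  have := integral_Ioi_of_hasDerivAt_of_tendsto' (fun x _ => hprim x)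
    ((hint.congr_fun habs measurableSet_Ioi).neg) hlim
  simpa only [integral_neg, sub_self, mul_zero, neg_zero, exp_zero, one_mul, zero_sub,
    neg_inj] using this

theorem setIntegral_Iic_exp_neg_mul_abs_sub_mul (hκ : 0 < κ)
    (hg : ∀ x, HasDerivAt g (g' x) x) (hg' : Continuous g')
    (hgC : ∀ x, |g x| ≤ C) (hg'C : ∀ x, |g' x| ≤ C) :
    ∫ x in Iic ξ, exp (-(κ * |x - ξ|)) * (κ * g x + g' x) = g ξ := by
  have h := setIntegral_Ioi_exp_neg_mul_abs_sub_mul (g := fun x => g (-x))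
    (g' := fun x => -g' (-x)) (ξ := -ξ) hκ
    (fun x => ((hg (-x)).comp x (hasDerivAt_neg x)).congr_deriv (mul_neg_one _))
    (hg'.comp continuous_neg).neg (fun x => hgC (-x)) (fun x => (abs_neg _).trans_le (hg'C (-x)))
  have hrefl := integral_comp_neg_Ioi (-ξ) fun x => exp (-(κ * |x - ξ|)) * (κ * g x + g' x)
  rw [neg_neg] at hrefl h
  rw [← hrefl, ← h]
  congr 1 with x
  rw [sub_neg_eq_add, sub_neg_eq_add, ← abs_neg (-x - ξ)]
  ring_nf

theorem two_mul_le_integral_exp_neg_mul_abs_sub_mul (hκ : 0 < κ)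
    (hg : ∀ x, HasDerivAt g (g' x) x) (hg' : Continuous g')
    (hgC : ∀ x, |g x| ≤ C) (hg'C : ∀ x, |g' x| ≤ C) :
    2 * g ξ ≤ ∫ x, exp (-(κ * |x - ξ|)) * (κ * g x + |g' x|) := by
  have hgc : Continuous g := continuous_iff_continuousAt.2 fun x => (hg x).continuousAt
  have hint : ∀ f : ℝ → ℝ, Continuous f → (∀ x, |f x| ≤ C) →
      Integrable fun x => exp (-(κ * |x - ξ|)) * (κ * g x + f x) :=
    fun f hf hfC => integrable_exp_neg_mul_abs_sub_mul_add hκ hgc hf hgC hfC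
  have habs := hint _ hg'.abs fun x => (abs_abs (g' x)).trans_le (hg'C x)
  have hplus := hint _ hg' hg'C
  have hminus : Integrable fun x => exp (-(κ * |x - ξ|)) * (κ * g x - g' x) := by
    simpa only [Pi.neg_apply, ← sub_eq_add_neg] using
      hint _ hg'.neg fun x => (abs_neg (g' x)).trans_le (hg'C x)
  rw [← intervalIntegral.integral_Iic_add_Ioi (b := ξ) habs.integrableOn habs.integrableOn]
  calc 2 * g ξ = (∫ x in Iic ξ, exp (-(κ * |x - ξ|)) * (κ * g x + g' x))
        + ∫ x in Ioi ξ, exp (-(κ * |x - ξ|)) * (κ * g x - g' x) := by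
        rw [setIntegral_Iic_exp_neg_mul_abs_sub_mul hκ hg hg' hgC hg'C,
          setIntegral_Ioi_exp_neg_mul_abs_sub_mul hκ hg hg' hgC hg'C]
        ring
    _ ≤ _ := add_le_add
        (setIntegral_mono hplus.integrableOn habs.integrableOn fun x =>
          mul_le_mul_of_nonneg_left (by linarith [le_abs_self (g' x)]) (exp_pos _).le)
        (setIntegral_mono hminus.integrableOn habs.integrableOn fun x =>
          mul_le_mul_of_nonneg_left (by linarith [neg_abs_le (g' x)]) (exp_pos _).le)

end ExpWeight

theorem integrable_exp_neg_mul_abs_sub_mul_sq_norm_add {E : Type*} [NormedAddCommGroup E]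
    [NormedSpace ℝ E] {w : ℝ → E} {κ C : ℝ} (hκ : 0 < κ) (hw : ContDiff ℝ 1 w)
    (hC : ∀ x, ‖w x‖ ≤ C ∧ ‖deriv w x‖ ≤ C) (ξ : ℝ) :
    Integrable fun x => exp (-(κ * |x - ξ|)) * (‖w x‖ ^ 2 + ‖deriv w x‖ ^ 2) :=
  integrable_exp_neg_mul_abs_sub_mul (f := fun x => ‖w x‖ ^ 2 + ‖deriv w x‖ ^ 2)
    (C := 2 * C ^ 2) hκ ((hw.continuous.norm.pow 2).add ((hw.continuous_deriv le_rfl).norm.pow 2))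
    fun x => by
      rw [abs_of_nonneg (by positivity)]
      nlinarith [(hC x).1, (hC x).2, norm_nonneg (w x), norm_nonneg (deriv w x)]

theorem two_mul_sq_norm_le_integral_exp_neg_mul_abs_sub {E : Type*} [NormedAddCommGroup E]
    [InnerProductSpace ℝ E] {w : ℝ → E} {κ C : ℝ} (hκ : 0 < κ) (hw : ContDiff ℝ 1 w)
    (hC : ∀ x, ‖w x‖ ≤ C ∧ ‖deriv w x‖ ≤ C) (ξ : ℝ) :
    2 * ‖w ξ‖ ^ 2 ≤ (1 + κ) * ∫ x, exp (-(κ * |x - ξ|)) * (‖w x‖ ^ 2 + ‖deriv w x‖ ^ 2) := by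
  have hwc : Continuous w := hw.continuous
  have hw'c : Continuous (deriv w) := hw.continuous_deriv le_rfl
  have hderiv : ∀ x, HasDerivAt (fun x => ‖w x‖ ^ 2) (2 * inner ℝ (w x) (deriv w x)) x :=
    fun x => (hw.differentiable one_ne_zero x).hasDerivAt.norm_sq
  have hinner : ∀ x, |2 * inner ℝ (w x) (deriv w x)| ≤ ‖w x‖ ^ 2 + ‖deriv w x‖ ^ 2 := by
    intro x
    rw [abs_mul, abs_two]
    nlinarith [abs_real_inner_le_norm (w x) (deriv w x), sq_nonneg (‖w x‖ - ‖deriv w x‖)]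
  have hbound : ∀ x, ‖w x‖ ^ 2 + ‖deriv w x‖ ^ 2 ≤ 2 * C ^ 2 := fun x => by
    nlinarith [(hC x).1, (hC x).2, norm_nonneg (w x), norm_nonneg (deriv w x)]
  have hsq : ∀ x, |‖w x‖ ^ 2| ≤ 2 * C ^ 2 := fun x => by
    rw [abs_of_nonneg (sq_nonneg _)]; linarith [hbound x, sq_nonneg ‖deriv w x‖]
  have hint_left : Integrable fun x =>
      exp (-(κ * |x - ξ|)) * (κ * ‖w x‖ ^ 2 + |2 * inner ℝ (w x) (deriv w x)|) :=
    integrable_exp_neg_mul_abs_sub_mul_add hκ (hwc.norm.pow 2)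
      (continuous_const.mul (hwc.inner hw'c)).abs hsq fun x => by
        rw [abs_abs]; exact (hinner x).trans (hbound x)
  calc 2 * ‖w ξ‖ ^ 2
      ≤ ∫ x, exp (-(κ * |x - ξ|)) * (κ * ‖w x‖ ^ 2 + |2 * inner ℝ (w x) (deriv w x)|) :=
        two_mul_le_integral_exp_neg_mul_abs_sub_mul hκ hderiv
          (continuous_const.mul (hwc.inner hw'c)) hsq fun x => (hinner x).trans (hbound x)
    _ ≤ ∫ x, (1 + κ) * (exp (-(κ * |x - ξ|)) * (‖w x‖ ^ 2 + ‖deriv w x‖ ^ 2)) := by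
        refine integral_mono hint_left
          ((integrable_exp_neg_mul_abs_sub_mul_sq_norm_add hκ hw hC ξ).const_mul _) fun x => ?_
        have hpt : κ * ‖w x‖ ^ 2 + |2 * inner ℝ (w x) (deriv w x)|
            ≤ (1 + κ) * (‖w x‖ ^ 2 + ‖deriv w x‖ ^ 2) := by
          nlinarith [hinner x, sq_nonneg ‖w x‖, sq_nonneg ‖deriv w x‖]
        calc _ ≤ exp (-(κ * |x - ξ|)) * ((1 + κ) * (‖w x‖ ^ 2 + ‖deriv w x‖ ^ 2)) :=
              mul_le_mul_of_nonneg_left hpt (exp_pos _).le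
          _ = _ := by ring
    _ = _ := integral_const_mul _ _

theorem rho0_pos (q : ℝ) : 0 < rho0 q :=
  one_div_pos.2 (one_pos.trans_le (le_max_left _ _))

theorem rho0_mul_neg_four_mul_le_one (q : ℝ) : rho0 q * -(4 * q) ≤ 1 := by
  rw [rho0, one_div, inv_mul_le_iff₀ (one_pos.trans_le (le_max_left _ _)), mul_one]
  exact le_max_right _ _

theorem rho0_mul_add_div_four_nonneg {q a v : ℝ} (ha : 0 ≤ a) (hv : q * a ≤ v) :
    0 ≤ rho0 q * v + a / 4 := by
  nlinarith [mul_le_mul_of_nonneg_left hv (rho0_pos q).le,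
    mul_le_mul_of_nonneg_right (rho0_mul_neg_four_mul_le_one q) ha]

theorem min_rho0_mul_add_le {q a b v : ℝ} (ha : 0 ≤ a) (hb : 0 ≤ b) (hv : q * a ≤ v) :
    min (rho0 q / 2) (1 / 4) * (a + b) ≤ rho0 q * (b / 2 + v) + a / 2 := by
  nlinarith [rho0_mul_add_div_four_nonneg ha hv,
    mul_le_mul_of_nonneg_right (min_le_right (rho0 q / 2) (1 / 4)) ha,
    mul_le_mul_of_nonneg_right (min_le_left (rho0 q / 2) (1 / 4)) hb]

theorem min_rho0_mul_integral_le_firewall {E : Type*} [NormedAddCommGroup E] [NormedSpace ℝ E]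
    [ProperSpace E] {V : E → ℝ} {w : ℝ → E} {q κ C : ℝ} (hV : Continuous V)
    (hq : ∀ u, q * ‖u‖ ^ 2 ≤ V u) (hκ : 0 < κ) (hw : ContDiff ℝ 1 w)
    (hC : ∀ x, ‖w x‖ ≤ C ∧ ‖deriv w x‖ ≤ C) (ξ : ℝ) :
    min (rho0 q / 2) (1 / 4) * ∫ x, exp (-(κ * |x - ξ|)) * (‖w x‖ ^ 2 + ‖deriv w x‖ ^ 2)
      ≤ ∫ x, exp (-(κ * |x - ξ|)) *
          (rho0 q * (‖deriv w x‖ ^ 2 / 2 + V (w x)) + ‖w x‖ ^ 2 / 2) := by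
  have hwc : Continuous w := hw.continuous
  have hw'c : Continuous (deriv w) := hw.continuous_deriv le_rfl
  obtain ⟨K, hK⟩ := (isCompact_closedBall (0 : E) C).exists_bound_of_continuousOn hV.continuousOn
  have hVw : ∀ x, |V (w x)| ≤ K := fun x => hK _ (mem_closedBall_zero_iff.2 (hC x).1)
  have hsq : ∀ x, ‖w x‖ ^ 2 ≤ C ^ 2 ∧ ‖deriv w x‖ ^ 2 ≤ C ^ 2 := fun x =>
    ⟨pow_le_pow_left₀ (norm_nonneg _) (hC x).1 2, pow_le_pow_left₀ (norm_nonneg _) (hC x).2 2⟩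
  have hint_right : Integrable fun x => exp (-(κ * |x - ξ|)) *
      (rho0 q * (‖deriv w x‖ ^ 2 / 2 + V (w x)) + ‖w x‖ ^ 2 / 2) :=
    integrable_exp_neg_mul_abs_sub_mul (C := rho0 q * (C ^ 2 / 2 + K) + C ^ 2 / 2) hκ
      (by fun_prop) fun x => by
        have hρ := rho0_pos q
        have := abs_le.1 (hVw x)
        rw [abs_le]
        constructor <;> nlinarith [hsq x, sq_nonneg ‖w x‖, sq_nonneg ‖deriv w x‖]
  rw [← integral_const_mul]
  refine integral_mono
    ((integrable_exp_neg_mul_abs_sub_mul_sq_norm_add hκ hw hC ξ).const_mul _) hint_right fun x => ?_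
  calc _ = exp (-(κ * |x - ξ|)) * (min (rho0 q / 2) (1 / 4) * (‖w x‖ ^ 2 + ‖deriv w x‖ ^ 2)) := by
        ring
    _ ≤ _ := mul_le_mul_of_nonneg_left
        (min_rho0_mul_add_le (sq_nonneg _) (sq_nonneg _) (hq (w x))) (exp_pos _).le

theorem kappa0_pos (q : ℝ) {lamMin : ℝ} (h : 0 < lamMin) : 0 < kappa0 q lamMin :=
  lt_min (sqrt_pos.2 (div_pos two_pos (rho0_pos q))) (sqrt_pos.2 (half_pos h))

theorem one_add_kappa0_mul_descSmall_sq (q lamMin d : ℝ) :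
    (1 + kappa0 q lamMin) * descSmall q lamMin d ^ 2
      = 2 * min (rho0 q / 2) (1 / 4) * d ^ 2 := by
  have hκ : 0 ≤ kappa0 q lamMin := le_min (sqrt_nonneg _) (sqrt_nonneg _)
  have hμ : 0 ≤ min (rho0 q / 2) (1 / 4) := le_min (by linarith [rho0_pos q]) (by norm_num)
  rw [descSmall, mul_pow, sq_sqrt (by positivity)]
  field_simp

theorem statement9_general
    (n : ℕ) (V : EuclideanSpace ℝ (Fin n) → ℝ)
    (hV : ContDiff ℝ 2 V)
    (h0 : IsMinPt V (0 : EuclideanSpace ℝ (Fin n))) (hV0 : V 0 = 0)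
    (lamMin dEsc : ℝ) (hlamMin : 0 < lamMin)
    (hdEsc : 0 < dEsc)
    (qlow : ℝ)
    (hqlow : ∀ m : EuclideanSpace ℝ (Fin n), IsMinPt V m →
      ∀ u : EuclideanSpace ℝ (Fin n), qlow * ‖u - m‖ ^ 2 ≤ V u - V m) :
    ∀ w : ℝ → EuclideanSpace ℝ (Fin n), ContDiff ℝ 1 w →
      (∃ C, ∀ x : ℝ, ‖w x‖ ≤ C ∧ ‖deriv w x‖ ≤ C) →
      ∀ ξ : ℝ,
        (∫ x : ℝ, exp (-(kappa0 qlow lamMin * |x - ξ|)) *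
            (rho0 qlow * (‖deriv w x‖ ^ 2 / 2 + V (w x)) + ‖w x‖ ^ 2 / 2))
          ≤ (descSmall qlow lamMin dEsc) ^ 2 →
        ‖w ξ‖ ≤ dEsc := by
  intro w hw ⟨C, hC⟩ ξ hfirewall
  set κ := kappa0 qlow lamMin
  set μ := min (rho0 qlow / 2) (1 / 4)
  have hκ : 0 < κ := kappa0_pos qlow hlamMin
  have hμ : 0 < μ := lt_min (half_pos (rho0_pos qlow)) (by norm_num)
  have hq : ∀ u, qlow * ‖u‖ ^ 2 ≤ V u := fun u => by simpa [hV0] using hqlow 0 h0 u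
  have key : μ * (2 * ‖w ξ‖ ^ 2) ≤ μ * (2 * dEsc ^ 2) := calc
    _ ≤ μ * ((1 + κ) * ∫ x, exp (-(κ * |x - ξ|)) * (‖w x‖ ^ 2 + ‖deriv w x‖ ^ 2)) :=
      mul_le_mul_of_nonneg_left (two_mul_sq_norm_le_integral_exp_neg_mul_abs_sub hκ hw hC ξ) hμ.le
    _ = (1 + κ) * (μ * ∫ x, exp (-(κ * |x - ξ|)) * (‖w x‖ ^ 2 + ‖deriv w x‖ ^ 2)) := by ring
    _ ≤ (1 + κ) * descSmall qlow lamMin dEsc ^ 2 := mul_le_mul_of_nonneg_left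
      ((min_rho0_mul_integral_le_firewall hV.continuous hq hκ hw hC ξ).trans hfirewall)
      (by linarith)
    _ = μ * (2 * dEsc ^ 2) := by rw [one_add_kappa0_mul_descSmall_sq]; ring
  exact (pow_le_pow_iff_left₀ (norm_nonneg _) hdEsc.le two_ne_zero).1
    (by linarith [le_of_mul_le_mul_left key hμ])

/-- Lemma "escape/Escape": smallness of the firewall controls the distance to the
minimum point. -/
theorem statement9
    (n : ℕ) (hn : 1 ≤ n) (V : EuclideanSpace ℝ (Fin n) → ℝ)
    (hV : ContDiff ℝ 2 V) (hcoerc : Hcoerc V)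
    (hnondeg : ∀ u : EuclideanSpace ℝ (Fin n), gradient V u = 0 →
      ∀ w : EuclideanSpace ℝ (Fin n), w ≠ 0 → hessian V u w ≠ 0)
    (h0 : IsMinPt V (0 : EuclideanSpace ℝ (Fin n))) (hV0 : V 0 = 0)
    (lamMin lamMax dEsc : ℝ) (hlamMin : 0 < lamMin) (hlam : lamMin ≤ lamMax)
    (hdEsc : 0 < dEsc) (hsand : EscSandwich V lamMin lamMax dEsc)
    (qlow : ℝ)
    (hqlow : ∀ m : EuclideanSpace ℝ (Fin n), IsMinPt V m →
      ∀ u : EuclideanSpace ℝ (Fin n), qlow * ‖u - m‖ ^ 2 ≤ V u - V m) :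
    ∀ w : ℝ → EuclideanSpace ℝ (Fin n), ContDiff ℝ 1 w →
      (∃ C, ∀ x : ℝ, ‖w x‖ ≤ C ∧ ‖deriv w x‖ ≤ C) →
      ∀ ξ : ℝ,
        (∫ x : ℝ, exp (-(kappa0 qlow lamMin * |x - ξ|)) *
            (rho0 qlow * (‖deriv w x‖ ^ 2 / 2 + V (w x)) + ‖w x‖ ^ 2 / 2))
          ≤ (descSmall qlow lamMin dEsc) ^ 2 →
        ‖w ξ‖ ≤ dEsc :=
  statement9_general n V hV h0 hV0 lamMin dEsc hlamMin hdEsc qlow hqlow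

end
end

section
/- Let c₀ > 0 and let x : [0,+∞) → ℝ satisfy x(t+s) ≤ x(t) + c₀ s for all t, s ≥ 0. Define x̄(s) = sup_{t ≥ 0} ( x(t+s) − x(t) ), c_inf = liminf_{t→+∞} x(t)/t, and c̄_sup = limsup_{s→+∞} x̄(s)/s. If c is a real number with c_inf < c < c̄_sup, then there exist sequences (t_p), (s_p) and (s̄_p) of real numbers such that: for every p, t_p ≥ 0 and 0 ≤ s_p ≤ s̄_p; x(t_p + s_p) − x(t_p) − c s_p → +∞ as p → +∞; and, for every p, x(t_p + s̄_p) − x(t_p) − c s̄_p ≤ 0. -/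
open Filter Topology Set

/-!
Choose `c'' < c < c'` strictly between the two mean speeds. Since `x̄(s) / s > c'` for
arbitrarily large `s`, some interval `[t, t + s]` carries a gain of more than `c' s`, i.e. an
excursion of size at least `(c' - c) s` to the right of the frame moving at speed `c` from
`(t, x t)`. Since `x u < c'' u` for arbitrarily large `u`, and the frame line grows like
`c u > c'' u`, every such excursion is followed by a return behind the frame.
-/

/-- The paper's `x̄(s)`. -/
noncomputable def supIncrement (x : ℝ → ℝ) (s : ℝ) : ℝ :=
  sSup ((fun t => x (t + s) - x t) '' Ici 0)

/-- In `ℝ` an unbounded `liminf` or `limsup` takes the junk value `0`, which the strict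
inequality rules out. -/
lemma isCoboundedUnder_le_of_liminf_lt_limsup {α : Type*} {l : Filter α} [l.NeBot]
    {f g : α → ℝ} {C : ℝ} (hfg : ∀ᶠ a in l, f a ≤ g a + C) (h : liminf f l < limsup g l) :
    l.IsCoboundedUnder (· ≤ ·) g := by
  by_contra hg
  rw [Real.limsup_of_not_isCoboundedUnder hg] at h
  have hf : l.IsBoundedUnder (· ≥ ·) f := by
    by_contra hf
    rw [Real.liminf_of_not_isBoundedUnder hf] at h
    exact lt_irrefl _ h
  obtain ⟨b, hb⟩ := hf
  refine hg (isCoboundedUnder_le_of_eventually_le l (x := b - C) ?_)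
  filter_upwards [eventually_map.mp hb, hfg] with a hba hfga
  linarith

section GrowthBound

variable {c₀ : ℝ} {x : ℝ → ℝ}

lemma bddAbove_increments (hx : ∀ t s : ℝ, 0 ≤ t → 0 ≤ s → x (t + s) ≤ x t + c₀ * s)
    {s : ℝ} (hs : 0 ≤ s) :
    BddAbove ((fun t => x (t + s) - x t) '' Ici 0) := by
  refine ⟨c₀ * s, ?_⟩
  rintro _ ⟨t, ht, rfl⟩
  linarith [hx t s ht hs]

lemma sub_le_supIncrement (hx : ∀ t s : ℝ, 0 ≤ t → 0 ≤ s → x (t + s) ≤ x t + c₀ * s)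
    {s : ℝ} (hs : 0 ≤ s) : x s - x 0 ≤ supIncrement x s :=
  le_csSup (bddAbove_increments hx hs) ⟨0, self_mem_Ici, by simp⟩

lemma eventually_div_le_supIncrement_div_add
    (hx : ∀ t s : ℝ, 0 ≤ t → 0 ≤ s → x (t + s) ≤ x t + c₀ * s) :
    ∀ᶠ s in atTop, x s / s ≤ supIncrement x s / s + |x 0| := by
  filter_upwards [eventually_ge_atTop 1] with s hs
  have hs₀ : 0 < s := one_pos.trans_le hs
  have hx₀ : x 0 / s ≤ |x 0| :=
    (div_le_div_of_nonneg_right (le_abs_self _) hs₀.le).trans (div_le_self (abs_nonneg _) hs)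
  calc x s / s = (x s - x 0) / s + x 0 / s := by ring
    _ ≤ supIncrement x s / s + |x 0| :=
      add_le_add (div_le_div_of_nonneg_right (sub_le_supIncrement hx hs₀.le) hs₀.le) hx₀

lemma eventually_div_le (hx : ∀ t s : ℝ, 0 ≤ t → 0 ≤ s → x (t + s) ≤ x t + c₀ * s) :
    ∀ᶠ t in atTop, x t / t ≤ c₀ + |x 0| := by
  filter_upwards [eventually_ge_atTop 1] with t ht
  have ht₀ : 0 < t := one_pos.trans_le ht
  have hxt : x t ≤ x 0 + c₀ * t := by simpa using hx 0 t le_rfl ht₀.le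
  rw [div_le_iff₀ ht₀]
  nlinarith [le_abs_self (x 0), abs_nonneg (x 0)]

lemma frequently_lt_mul_of_liminf_div_lt
    (hx : ∀ t s : ℝ, 0 ≤ t → 0 ≤ s → x (t + s) ≤ x t + c₀ * s)
    {c : ℝ} (h : liminf (fun t => x t / t) atTop < c) :
    ∃ᶠ t in atTop, x t < c * t := by
  have hf := frequently_lt_of_liminf_lt (isCoboundedUnder_ge_of_eventually_le atTop
    (eventually_div_le hx)) h
  refine (hf.and_eventually (eventually_gt_atTop 0)).mono fun t ⟨hlt, ht⟩ => ?_
  exact (div_lt_iff₀ ht).mp hlt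

end GrowthBound

section Frame

variable {x : ℝ → ℝ} {c : ℝ}

lemma frequently_exists_increment_gt
    (hcob : atTop.IsCoboundedUnder (· ≤ ·) fun s => supIncrement x s / s)
    (h : c < limsup (fun s => supIncrement x s / s) atTop) :
    ∃ᶠ s in atTop, ∃ t ≥ 0, c * s < x (t + s) - x t := by
  refine ((frequently_lt_of_lt_limsup hcob h).and_eventually (eventually_gt_atTop 0)).mono ?_
  rintro s ⟨hlt, hs⟩
  obtain ⟨_, ⟨t, ht, rfl⟩, hts⟩ := exists_lt_of_lt_csSup (nonempty_Ici.image _)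
    ((lt_div_iff₀ hs).mp hlt)
  exact ⟨t, ht, hts⟩

lemma exists_excursion_ge {c' : ℝ} (hc : c < c')
    (h : ∃ᶠ s in atTop, ∃ t ≥ 0, c' * s < x (t + s) - x t) (M : ℝ) :
    ∃ t ≥ 0, ∃ s ≥ 0, M ≤ x (t + s) - x t - c * s := by
  obtain ⟨s, ⟨t, ht, hts⟩, hs⟩ :=
    (h.and_eventually (eventually_ge_atTop (max 0 (M / (c' - c))))).exists
  have hM : M ≤ (c' - c) * s := (div_le_iff₀' (sub_pos.mpr hc)).mp (le_of_max_le_right hs)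
  exact ⟨t, ht, s, le_of_max_le_left hs, by linarith⟩

lemma frequently_return {c'' : ℝ} (hc : c'' < c) (h : ∃ᶠ u in atTop, x u < c'' * u) (t : ℝ) :
    ∃ᶠ u in atTop, x u - x t - c * (u - t) ≤ 0 := by
  refine (h.and_eventually (eventually_ge_atTop ((c * t - x t) / (c - c'')))).mono ?_
  rintro u ⟨hxu, hu⟩
  have := (div_le_iff₀ (sub_pos.mpr hc)).mp hu
  nlinarith

lemma exists_excursions_and_returns
    (hexc : ∀ M : ℝ, ∃ t ≥ 0, ∃ s ≥ 0, M ≤ x (t + s) - x t - c * s)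
    (hret : ∀ t, ∃ᶠ u in atTop, x u - x t - c * (u - t) ≤ 0) :
    ∃ t s sbar : ℕ → ℝ,
      (∀ p, 0 ≤ t p ∧ 0 ≤ s p ∧ s p ≤ sbar p) ∧
      Tendsto (fun p => x (t p + s p) - x (t p) - c * s p) atTop atTop ∧
      ∀ p, x (t p + sbar p) - x (t p) - c * sbar p ≤ 0 := by
  choose t ht s hs hts using fun p : ℕ => hexc p
  choose u hu hret using fun p =>
    ((hret (t p)).and_eventually (eventually_ge_atTop (t p + s p))).exists
  refine ⟨t, s, fun p => u p - t p, fun p => ⟨ht p, hs p, by linarith [hret p]⟩,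
    tendsto_atTop_mono hts tendsto_natCast_atTop_atTop, fun p => ?_⟩
  simpa using hu p

end Frame

theorem statement14_general
    (c₀ : ℝ) (x : ℝ → ℝ)
    (hx : ∀ t s : ℝ, 0 ≤ t → 0 ≤ s → x (t + s) ≤ x t + c₀ * s) (c : ℝ)
    (h1 : Filter.liminf (fun t => x t / t) atTop < c)
    (h2 : c < Filter.limsup
        (fun s => sSup ((fun t => x (t + s) - x t) '' Ici 0) / s) atTop) :
    ∃ t s sbar : ℕ → ℝ,
      (∀ p, 0 ≤ t p ∧ 0 ≤ s p ∧ s p ≤ sbar p) ∧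
      Tendsto (fun p => x (t p + s p) - x (t p) - c * s p) atTop atTop ∧
      ∀ p, x (t p + sbar p) - x (t p) - c * sbar p ≤ 0 := by
  change c < limsup (fun s => supIncrement x s / s) atTop at h2
  obtain ⟨c'', h1', hc''⟩ := exists_between h1
  obtain ⟨c', hc', h2'⟩ := exists_between h2
  have hcob := isCoboundedUnder_le_of_liminf_lt_limsup
    (eventually_div_le_supIncrement_div_add hx) (h1.trans h2)
  exact exists_excursions_and_returns
    (exists_excursion_ge hc' (frequently_exists_increment_gt hcob h2'))
    (frequently_return hc'' (frequently_lt_mul_of_liminf_div_lt hx h1'))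

/-- Large excursions to the right and returns for the escape point in a frame
travelling at speed `c`. -/
theorem statement14
    (c₀ : ℝ) (hc₀ : 0 < c₀) (x : ℝ → ℝ)
    (hx : ∀ t s : ℝ, 0 ≤ t → 0 ≤ s → x (t + s) ≤ x t + c₀ * s) (c : ℝ)
    (h1 : Filter.liminf (fun t => x t / t) atTop < c)
    (h2 : c < Filter.limsup
        (fun s => sSup ((fun t => x (t + s) - x t) '' Ici 0) / s) atTop) :
    ∃ t s sbar : ℕ → ℝ,
      (∀ p, 0 ≤ t p ∧ 0 ≤ s p ∧ s p ≤ sbar p) ∧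
      Tendsto (fun p => x (t p + s p) - x (t p) - c * s p) atTop atTop ∧
      ∀ p, x (t p + sbar p) - x (t p) - c * sbar p ≤ 0 :=
  statement14_general c₀ x hx c h1 h2
end

section
/- Let c₀ > 0 and let x : [0,+∞) → ℝ satisfy x(t+s) ≤ x(t) + c₀ s for all t, s ≥ 0. Define x̄(s) = sup_{t ≥ 0} ( x(t+s) − x(t) ), c_inf = liminf_{t→+∞} x(t)/t, and c̄_sup = limsup_{s→+∞} x̄(s)/s. If c is a real number with c_inf < c < c̄_sup, then for every τ > 0 there exist sequences (t'_p) and (s'_p) of real numbers such that: for every p, t'_p ≥ 0 and τ ≤ s'_p ≤ 2τ; for every p and every s ∈ [0, τ], x(t'_p + s) − x(t'_p) − c s ≥ 0; for every p, x(t'_p + s'_p) − x(t'_p) − c s'_p ≤ 1; and t'_p → +∞ as p → +∞. -/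
open Filter Topology Set

/-!
In the frame `y t = x t - c t`, `y` grows at rate at most `c₀ - c`. Since `c_inf < c`, `y` drops
below every level at arbitrarily late times; since `c < c̄_sup`, it has arbitrarily large late
rises, and after such a rise the last time `σ₀` at which `y` is back at its starting level is a
minimum of `y` on `[σ₀, σ₀ + τ]`.

If from every such window minimum `σ` the function stayed above `y σ + 1` on `[σ + τ, σ + 2τ]`,
the last time before `σ + τ` at level `y σ + 1` would again be a window minimum. Iterating gives
window minima `σ_k` at levels `y σ₀ + k`, each window reaching the next one; the rate bound forces
`σ_k → ∞`, so `y ≥ y σ₀` on `[σ₀, ∞)`, contradicting the late drops.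
-/

def UpperLipschitzOnIci (L : ℝ) (y : ℝ → ℝ) : Prop :=
  ∀ ⦃t t' : ℝ⦄, 0 ≤ t → t ≤ t' → y t' ≤ y t + L * (t' - t)

namespace UpperLipschitzOnIci

variable {L : ℝ} {y : ℝ → ℝ}

theorem mono {L' : ℝ} (hy : UpperLipschitzOnIci L y) (hL : L ≤ L') :
    UpperLipschitzOnIci L' y := fun t t' ht htt' =>
  (hy ht htt').trans (by gcongr)

theorem le_apply_of_forall_lt_on_Ioc (hy : UpperLipschitzOnIci L y) {σ d v : ℝ} (hσ : 0 ≤ σ)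
    (hσd : σ < d) (h : ∀ t ∈ Ioc σ d, v < y t) : v ≤ y σ := by
  have hlim : Tendsto (fun t => y σ + L * (t - σ)) (𝓝[>] σ) (𝓝 (y σ)) := by
    have hcont : Continuous fun t => y σ + L * (t - σ) := by fun_prop
    simpa using (hcont.tendsto σ).mono_left nhdsWithin_le_nhds
  refine ge_of_tendsto hlim ?_
  filter_upwards [Ioc_mem_nhdsGT hσd] with t ht
  exact (h t ht).le.trans (hy hσ ht.1.le)

theorem apply_csSup_le {S : Set ℝ} (hy : UpperLipschitzOnIci L y) (hS : S ⊆ Ici 0)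
    (hne : S.Nonempty) (hbdd : BddAbove S) {v : ℝ} (h : ∀ t ∈ S, y t ≤ v) :
    y (sSup S) ≤ v := by
  have := mem_closure_iff_nhdsWithin_neBot.mp (csSup_mem_closure hne hbdd)
  have hlim : Tendsto (fun t => v + L * (sSup S - t)) (𝓝[S] sSup S) (𝓝 v) := by
    have hcont : Continuous fun t => v + L * (sSup S - t) := by fun_prop
    simpa using (hcont.tendsto (sSup S)).mono_left nhdsWithin_le_nhds
  refine ge_of_tendsto hlim ?_
  filter_upwards [self_mem_nhdsWithin] with t ht
  linarith [hy (hS ht) (le_csSup hbdd ht), h t ht]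

theorem exists_last_crossing (hy : UpperLipschitzOnIci L y) {a d v : ℝ} (ha : 0 ≤ a)
    (had : a ≤ d) (hya : y a ≤ v) (hvd : v < y d) :
    ∃ σ ∈ Ico a d, y σ = v ∧ ∀ t ∈ Ioc σ d, v < y t := by
  set S := {t | t ∈ Icc a d ∧ y t ≤ v}
  have hbdd : BddAbove S := ⟨d, fun t ht => ht.1.2⟩
  have haS : a ∈ S := ⟨⟨le_rfl, had⟩, hya⟩
  have hσa : a ≤ sSup S := le_csSup hbdd haS
  have hle : y (sSup S) ≤ v :=
    hy.apply_csSup_le (fun t ht => ha.trans ht.1.1) ⟨a, haS⟩ hbdd fun t ht => ht.2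
  have hσd : sSup S < d := by
    refine (csSup_le ⟨a, haS⟩ fun t ht => ht.1.2).lt_of_ne fun h => ?_
    rw [h] at hle
    linarith
  have habove : ∀ t ∈ Ioc (sSup S) d, v < y t := fun t ht =>
    not_le.mp fun hyt => (le_csSup hbdd ⟨⟨hσa.trans ht.1.le, ht.2⟩, hyt⟩).not_gt ht.1
  refine ⟨sSup S, ⟨hσa, hσd⟩, le_antisymm hle ?_, habove⟩
  exact hy.le_apply_of_forall_lt_on_Ioc (ha.trans hσa) hσd habove

theorem exists_isMinOn_of_rise (hy : UpperLipschitzOnIci L y) (hL : 0 ≤ L) {A D τ : ℝ}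
    (hτ : 0 ≤ τ) (hA : 0 ≤ A) (hAD : A ≤ D) (hrise : y A + L * τ < y D) :
    ∃ σ ≥ A, IsMinOn y (Icc σ (σ + τ)) σ := by
  obtain ⟨σ, ⟨hAσ, hσD⟩, hyσ, habove⟩ :=
    hy.exists_last_crossing hA hAD le_rfl (by linarith [mul_nonneg hL hτ])
  have hστ : σ + τ < D := by
    have := hy (hA.trans hAσ) hσD.le
    have : L * τ < L * (D - σ) := by linarith
    linarith [lt_of_mul_lt_mul_left this hL]
  refine ⟨σ, hAσ, isMinOn_iff.mpr fun t ht => ?_⟩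
  rcases ht.1.eq_or_lt with rfl | hσt
  · exact le_rfl
  · linarith [habove t ⟨hσt, by linarith [ht.2]⟩]

theorem exists_next_isMinOn (hy : UpperLipschitzOnIci L y) {u τ : ℝ} (hu : 0 ≤ u)
    (hτ : 0 ≤ τ) (hstay : ∀ s ∈ Icc τ (2 * τ), y u + 1 < y (u + s)) :
    ∃ u' ∈ Ioo u (u + τ), y u' = y u + 1 ∧ IsMinOn y (Icc u' (u' + τ)) u' := by
  obtain ⟨σ, ⟨huσ, hσ2⟩, hyσ, habove⟩ :=
    hy.exists_last_crossing hu (by linarith) (by linarith) (hstay (2 * τ) ⟨by linarith, le_rfl⟩)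
  have hσ : σ < u + τ := by
    by_contra! h
    have := hstay (σ - u) ⟨by linarith, by linarith⟩
    rw [add_sub_cancel] at this
    linarith
  refine ⟨σ, ⟨huσ.lt_of_ne fun h => ?_, hσ⟩, hyσ, isMinOn_iff.mpr fun t ht => ?_⟩
  · rw [← h] at hyσ
    linarith
  · rcases ht.1.eq_or_lt with rfl | hσt
    · exact le_rfl
    · linarith [habove t ⟨hσt, by linarith [ht.2]⟩]

theorem exists_isMinOn_return (hy : UpperLipschitzOnIci L y) (hL : 0 < L) {σ₀ τ : ℝ}
    (hσ₀ : 0 ≤ σ₀) (hτ : 0 ≤ τ) (hmin : IsMinOn y (Icc σ₀ (σ₀ + τ)) σ₀)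
    (hfall : ∃ T ≥ σ₀, y T < y σ₀) :
    ∃ u ≥ σ₀, IsMinOn y (Icc u (u + τ)) u ∧ ∃ s ∈ Icc τ (2 * τ), y (u + s) ≤ y u + 1 := by
  by_contra! hstay
  have hnext : ∀ u ≥ σ₀, IsMinOn y (Icc u (u + τ)) u →
      ∃ u' ∈ Ioo u (u + τ), y u' = y u + 1 ∧ IsMinOn y (Icc u' (u' + τ)) u' :=
    fun u hu hmin => hy.exists_next_isMinOn (hσ₀.trans hu) hτ (hstay u hu hmin)
  choose! g hg_mem hg_val hg_min using hnext
  set σ : ℕ → ℝ := fun k => g^[k] σ₀ with hσ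
  have hσ_succ (k : ℕ) : σ (k + 1) = g (σ k) := Function.iterate_succ_apply' g k σ₀
  have hinv (k : ℕ) : σ₀ ≤ σ k ∧ IsMinOn y (Icc (σ k) (σ k + τ)) (σ k) ∧
      y (σ k) = y σ₀ + k ∧ ∀ t ∈ Icc σ₀ (σ k), y σ₀ ≤ y t := by
    induction k with
    | zero =>
      refine ⟨le_rfl, hmin, by simp [hσ], fun t ht => ?_⟩
      rw [show t = σ₀ from le_antisymm ht.2 ht.1]
    | succ k ih =>
      obtain ⟨hle, hmin, hval, hfloor⟩ := ih
      obtain ⟨hlt, hlt'⟩ := hg_mem _ hle hmin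
      rw [hσ_succ]
      refine ⟨hle.trans hlt.le, hg_min _ hle hmin, by rw [hg_val _ hle hmin, hval]; push_cast; ring,
        fun t ht => ?_⟩
      rcases le_total t (σ k) with h | h
      · exact hfloor t ⟨ht.1, h⟩
      · linarith [isMinOn_iff.mp hmin t ⟨h, by linarith [ht.2]⟩, k.cast_nonneg (α := ℝ)]
  obtain ⟨T, hT, hyT⟩ := hfall
  obtain ⟨k, hk⟩ := exists_nat_gt (L * (T - σ₀))
  obtain ⟨hle, -, hval, hfloor⟩ := hinv k
  have hTk : T ≤ σ k := by
    by_contra! h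
    have hrate := hy hσ₀ hle
    have : L * (σ k - σ₀) ≤ L * (T - σ₀) := by gcongr
    linarith
  linarith [hfloor T ⟨hT, hTk⟩]

end UpperLipschitzOnIci

section Escape

variable {x : ℝ → ℝ} {c₀ : ℝ}

theorem upperLipschitzOnIci_sub_mul
    (hx : ∀ t s : ℝ, 0 ≤ t → 0 ≤ s → x (t + s) ≤ x t + c₀ * s) (c : ℝ) :
    UpperLipschitzOnIci (c₀ - c) (fun t => x t - c * t) := fun t t' ht htt' => by
  have := hx t (t' - t) ht (sub_nonneg.mpr htt')
  rw [add_sub_cancel] at this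
  linarith

theorem le_supIncrement (hx : ∀ t s : ℝ, 0 ≤ t → 0 ≤ s → x (t + s) ≤ x t + c₀ * s)
    {s t : ℝ} (hs : 0 ≤ s) (ht : 0 ≤ t) : x (t + s) - x t ≤ supIncrement x s :=
  le_csSup ⟨c₀ * s, by rintro _ ⟨t', ht', rfl⟩; linarith [hx t' s ht' hs]⟩ ⟨t, ht, rfl⟩

theorem isBoundedUnder_le_div_self
    (hx : ∀ t s : ℝ, 0 ≤ t → 0 ≤ s → x (t + s) ≤ x t + c₀ * s) :
    IsBoundedUnder (· ≤ ·) atTop (fun t => x t / t) := by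
  refine isBoundedUnder_of_eventually_le (a := c₀ + |x 0|) ?_
  filter_upwards [eventually_ge_atTop 1] with t ht
  have hxt := hx 0 t le_rfl (by linarith)
  rw [zero_add] at hxt
  rw [div_le_iff₀ (by linarith)]
  nlinarith [le_abs_self (x 0), abs_nonneg (x 0)]

theorem exists_ge_sub_mul_lt_of_liminf_lt
    (hx : ∀ t s : ℝ, 0 ≤ t → 0 ≤ s → x (t + s) ≤ x t + c₀ * s) {c : ℝ}
    (h : liminf (fun t => x t / t) atTop < c) (M T₀ : ℝ) : ∃ T ≥ T₀, x T - c * T < M := by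
  obtain ⟨c₁, hc₁, hc₁c⟩ := exists_between h
  have hfreq := frequently_lt_of_liminf_lt (isBoundedUnder_le_div_self hx).isCoboundedUnder_ge hc₁
  have hev : ∀ᶠ t in atTop, T₀ ≤ t ∧ 0 < t ∧ (c₁ - c) * t < M :=
    (eventually_ge_atTop T₀).and <| (eventually_gt_atTop 0).and <|
      (tendsto_id.const_mul_atTop_of_neg (sub_neg.mpr hc₁c)).eventually (eventually_lt_atBot M)
  obtain ⟨T, hT, hT₀, hpos, hM⟩ := (hfreq.and_eventually hev).exists
  rw [div_lt_iff₀ hpos] at hT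
  exact ⟨T, hT₀, by linarith⟩

theorem exists_frequently_lt_supIncrement_div
    (hx : ∀ t s : ℝ, 0 ≤ t → 0 ≤ s → x (t + s) ≤ x t + c₀ * s) {c : ℝ}
    (h1 : liminf (fun t => x t / t) atTop < c)
    (h2 : c < limsup (fun s => supIncrement x s / s) atTop) :
    ∃ c₂ > c, ∃ᶠ s in atTop, c₂ < supIncrement x s / s := by
  by_cases hcob : IsCoboundedUnder (· ≤ ·) atTop (fun s => supIncrement x s / s)
  · obtain ⟨c₂, hc, hc₂⟩ := exists_between h2
    exact ⟨c₂, hc, frequently_lt_of_lt_limsup hcob hc₂⟩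
  -- Otherwise both `limsup` and `liminf` take the junk value `0`.
  exfalso
  have hunbdd : ¬ IsBoundedUnder (· ≥ ·) atTop (fun t => x t / t) := by
    rintro ⟨a, ha⟩
    refine hcob (isCoboundedUnder_le_of_eventually_le atTop (x := a - |x 0|) ?_)
    filter_upwards [eventually_map.mp ha, eventually_ge_atTop 1] with s has hs
    calc a - |x 0| ≤ x s / s - x 0 / s := by
          have : x 0 / s ≤ |x 0| :=
            (div_le_div_of_nonneg_right (le_abs_self _) (by linarith)).trans
              (div_le_self (abs_nonneg _) hs)
          linarith
      _ = (x (0 + s) - x 0) / s := by rw [zero_add, sub_div]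
      _ ≤ supIncrement x s / s := by
          gcongr
          exact le_supIncrement hx (by linarith) le_rfl
  rw [Real.limsup_of_not_isCoboundedUnder hcob] at h2
  rw [Real.liminf_of_not_isBoundedUnder hunbdd] at h1
  linarith

theorem exists_rise_of_frequently_lt_supIncrement_div {L c c₂ : ℝ}
    (hy : UpperLipschitzOnIci L (fun t => x t - c * t)) (hc : c < c₂)
    (hfreq : ∃ᶠ s in atTop, c₂ < supIncrement x s / s) (R : ℝ) {S₀ : ℝ} (hS₀ : 0 ≤ S₀) :
    ∃ A ≥ S₀, ∃ D ≥ A, x A - c * A + R < x D - c * D := by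
  have hev : ∀ᶠ s in atTop, S₀ ≤ s ∧ 0 < s ∧ R + L * S₀ ≤ (c₂ - c) * s :=
    (eventually_ge_atTop S₀).and <| (eventually_gt_atTop 0).and <|
      (tendsto_id.const_mul_atTop (sub_pos.mpr hc)).eventually (eventually_ge_atTop _)
  obtain ⟨s, hs, hS₀s, hpos, hRs⟩ := (hfreq.and_eventually hev).exists
  rw [lt_div_iff₀ hpos] at hs
  obtain ⟨_, ⟨t, ht, rfl⟩, hts⟩ := exists_lt_of_lt_csSup (nonempty_Ici.image _) hs
  have hA := hy ht (le_add_of_nonneg_right hS₀ : t ≤ t + S₀)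
  refine ⟨t + S₀, le_add_of_nonneg_left ht, t + s, by linarith, ?_⟩
  dsimp only at hA hts
  linarith

theorem exists_isMinOn_return_of_liminf_lt_lt_limsup
    (hx : ∀ t s : ℝ, 0 ≤ t → 0 ≤ s → x (t + s) ≤ x t + c₀ * s) {c : ℝ}
    (h1 : liminf (fun t => x t / t) atTop < c)
    (h2 : c < limsup (fun s => supIncrement x s / s) atTop) {τ S₀ : ℝ} (hτ : 0 ≤ τ)
    (hS₀ : 0 ≤ S₀) :
    ∃ u ≥ S₀, IsMinOn (fun t => x t - c * t) (Icc u (u + τ)) u ∧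
      ∃ s ∈ Icc τ (2 * τ), x (u + s) - c * (u + s) ≤ x u - c * u + 1 := by
  set L := max (c₀ - c) 1
  have hL : 0 < L := lt_max_of_lt_right one_pos
  have hy := (upperLipschitzOnIci_sub_mul hx c).mono (le_max_left _ 1)
  obtain ⟨c₂, hc₂, hfreq⟩ := exists_frequently_lt_supIncrement_div hx h1 h2
  obtain ⟨A, hA, D, hAD, hrise⟩ :=
    exists_rise_of_frequently_lt_supIncrement_div hy hc₂ hfreq (L * τ) hS₀
  obtain ⟨σ, hσA, hmin⟩ := hy.exists_isMinOn_of_rise hL.le hτ (hS₀.trans hA) hAD hrise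
  obtain ⟨T, hT, hfall⟩ := exists_ge_sub_mul_lt_of_liminf_lt hx h1 (x σ - c * σ) σ
  obtain ⟨u, hσu, hu⟩ :=
    hy.exists_isMinOn_return hL (hS₀.trans (hA.trans hσA)) hτ hmin ⟨T, hT, hfall⟩
  exact ⟨u, hA.trans (hσA.trans hσu), hu⟩

end Escape

theorem statement15_general
    (c₀ : ℝ) (x : ℝ → ℝ)
    (hx : ∀ t s : ℝ, 0 ≤ t → 0 ≤ s → x (t + s) ≤ x t + c₀ * s) (c : ℝ)
    (h1 : Filter.liminf (fun t => x t / t) atTop < c)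
    (h2 : c < Filter.limsup
        (fun s => sSup ((fun t => x (t + s) - x t) '' Ici 0) / s) atTop) :
    ∀ τ : ℝ, 0 < τ →
      ∃ t' s' : ℕ → ℝ,
        (∀ p, 0 ≤ t' p ∧ τ ≤ s' p ∧ s' p ≤ 2 * τ) ∧
        (∀ p, ∀ s ∈ Icc (0:ℝ) τ, 0 ≤ x (t' p + s) - x (t' p) - c * s) ∧
        (∀ p, x (t' p + s' p) - x (t' p) - c * s' p ≤ 1) ∧
        Tendsto t' atTop atTop := by
  intro τ hτ
  choose t' ht' hmin s' hs' hreturn using fun p : ℕ =>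
    exists_isMinOn_return_of_liminf_lt_lt_limsup hx h1 h2 hτ.le p.cast_nonneg
  refine ⟨t', s', fun p => ⟨p.cast_nonneg.trans (ht' p), hs' p⟩, fun p s hs => ?_,
    fun p => by linarith [hreturn p], tendsto_atTop_mono ht' tendsto_natCast_atTop_atTop⟩
  have := isMinOn_iff.mp (hmin p) (t' p + s) ⟨by linarith [hs.1], by linarith [hs.2]⟩
  linarith

/-- The escape point remains to the right during a controlled time interval and
ends up to the left, in a frame travelling at speed `c`. -/
theorem statement15
    (c₀ : ℝ) (hc₀ : 0 < c₀) (x : ℝ → ℝ)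
    (hx : ∀ t s : ℝ, 0 ≤ t → 0 ≤ s → x (t + s) ≤ x t + c₀ * s) (c : ℝ)
    (h1 : Filter.liminf (fun t => x t / t) atTop < c)
    (h2 : c < Filter.limsup
        (fun s => sSup ((fun t => x (t + s) - x t) '' Ici 0) / s) atTop) :
    ∀ τ : ℝ, 0 < τ →
      ∃ t' s' : ℕ → ℝ,
        (∀ p, 0 ≤ t' p ∧ τ ≤ s' p ∧ s' p ≤ 2 * τ) ∧
        (∀ p, ∀ s ∈ Icc (0:ℝ) τ, 0 ≤ x (t' p + s) - x (t' p) - c * s) ∧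
        (∀ p, x (t' p + s' p) - x (t' p) - c * s' p ≤ 1) ∧
        Tendsto t' atTop atTop :=
  statement15_general c₀ x hx c h1 h2
end
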